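/- arXiv:2210.00309 — 5 statements merged into one kernel-verified Lean document; each statement's English description precedes it below -/
import Mathlib

section
/- Let z ∈ ℂ with Im z ≤ 0, let f be locally integrable, let 0 ≤ t₁ ≤ t₂, and let G, H : [t₁, t₂] → ℂ be differentiable functions solving the Dirac-type system G'(t) = -i z G(t) + conj(f(t)) H(t), H'(t) = i z H(t) + f(t) G(t). Assume |G(t)| ≤ |H(t)| for all t ∈ [t₁, t₂] (the Hermite–Biehler property of E in the closed lower half-plane). Then the scattering function 𝓔(t) := e^{i t z} G(t) satisfies |𝓔(t₂) − 𝓔(t₁)| ≤ |H(t₁)| · exp( (2 t₂ − t₁) |Im z| + ∫_{t₁}^{t₂} |f(s)| ds ) · ∫_{t₁}^{t₂} |f(s)| ds. -/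
/-!
The integrating factors `e^{∓itz}` remove the diagonal terms of the system: `𝓗(t) = e^{-itz} H(t)`
satisfies `𝓗' = e^{-itz} f G` and `𝓔' = e^{itz} conj(f) H`. Since `|G| ≤ |H|`, this gives
`|𝓗'| ≤ |f| |𝓗|`, and Grönwall's inequality with the merely integrable weight `|f|` bounds `|H|` on
`[t₁, t₂]` by `e^{(t₂ - t₁)|Im z| + ∫ |f|} |H(t₁)|`. Integrating `|𝓔'| ≤ e^{t₂ |Im z|} |f| |H|`
over `[t₁, t₂]` gives the claim.
-/

open MeasureTheory Set Filter Complex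

theorem LipschitzOnWith.comp_absolutelyContinuousOnInterval {X Y : Type*}
    [PseudoMetricSpace X] [PseudoMetricSpace Y] {φ : X → Y} {K : NNReal} {s : Set X}
    {f : ℝ → X} {a b : ℝ} (hφ : LipschitzOnWith K φ s) (hfs : MapsTo f (uIcc a b) s)
    (hf : AbsolutelyContinuousOnInterval f a b) :
    AbsolutelyContinuousOnInterval (φ ∘ f) a b := by
  unfold AbsolutelyContinuousOnInterval at hf ⊢
  refine squeeze_zero' (.of_forall fun _ ↦ Finset.sum_nonneg fun _ _ ↦ dist_nonneg) ?_
    (by simpa using hf.const_mul (K : ℝ))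
  rw [eventually_inf_principal]
  filter_upwards with E hE
  rw [Finset.mul_sum]
  gcongr with i hi
  exact hφ.dist_le_mul _ (hfs (hE.1 i hi).1) _ (hfs (hE.1 i hi).2)

theorem ContDiff.comp_absolutelyContinuousOnInterval {φ f : ℝ → ℝ} {a b : ℝ}
    (hφ : ContDiff ℝ 1 φ) (hf : AbsolutelyContinuousOnInterval f a b) :
    AbsolutelyContinuousOnInterval (φ ∘ f) a b := by
  obtain ⟨C, hC⟩ := hf.exists_bound
  obtain ⟨K, hK⟩ := hφ.contDiffOn.exists_lipschitzOnWith one_ne_zero (convex_Icc (-C) C)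
    isCompact_Icc
  exact hK.comp_absolutelyContinuousOnInterval (fun x hx ↦ abs_le.1 (hC x hx)) hf

theorem le_mul_exp_integral_of_le_add_integral {g w : ℝ → ℝ} {a b c : ℝ} (hab : a ≤ b)
    (hg : IntervalIntegrable g volume a b) (hg₀ : ∀ t ∈ Icc a b, 0 ≤ g t)
    (hw : ContinuousOn w (Icc a b))
    (hle : ∀ t ∈ Icc a b, w t ≤ c + ∫ s in a..t, g s * w s) :
    w b ≤ c * Real.exp (∫ s in a..b, g s) := by
  set y : ℝ → ℝ := fun t ↦ c + ∫ s in a..t, g s * w s with hy_def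
  set F : ℝ → ℝ := fun t ↦ ∫ s in a..t, g s with hF_def
  have hgw : IntervalIntegrable (fun s ↦ g s * w s) volume a b :=
    hg.mul_continuousOn (by rwa [uIcc_of_le hab])
  have ha : a ∈ uIcc a b := left_mem_uIcc
  have hy : AbsolutelyContinuousOnInterval y a b :=
    (LipschitzWith.const c).lipschitzOnWith.absolutelyContinuousOnInterval.fun_add
      (hgw.absolutelyContinuousOnInterval_intervalIntegral ha)
  have hF : AbsolutelyContinuousOnInterval (fun t ↦ Real.exp (-F t)) a b :=
    Real.contDiff_exp.comp_absolutelyContinuousOnInterval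
      (hg.absolutelyContinuousOnInterval_intervalIntegral ha).fun_neg
  -- `y e^{-F}` is only absolutely continuous, with a.e. derivative `g e^{-F} (w - y) ≤ 0`
  have hderiv :
      0 ≤ᵐ[volume.restrict (Icc a b)] fun t ↦ -deriv (fun t ↦ y t * Real.exp (-F t)) t := by
    rw [EventuallyLE, ae_restrict_iff' measurableSet_Icc]
    filter_upwards [hg.ae_hasDerivAt_integral, hgw.ae_hasDerivAt_integral] with t hFt hyt ht
    have ht' : t ∈ uIcc a b := by rwa [uIcc_of_le hab]
    have hφ : HasDerivAt (fun t ↦ y t * Real.exp (-F t))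
        (g t * w t * Real.exp (-F t) + y t * (Real.exp (-F t) * -g t)) t :=
      ((hyt ht' a ha).const_add c).mul (hFt ht' a ha).neg.exp
    rw [Pi.zero_apply, hφ.deriv]
    nlinarith [hle t ht, mul_nonneg (hg₀ t ht) (Real.exp_pos (-F t)).le]
  have := intervalIntegral.integral_nonneg_of_ae_restrict hab hderiv
  rw [intervalIntegral.integral_neg, (hy.fun_mul hF).integral_deriv_eq_sub] at this
  simp only [hy_def, hF_def, intervalIntegral.integral_same, add_zero, neg_zero, Real.exp_zero,
    mul_one, neg_sub, sub_nonneg] at this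
  calc w b ≤ y b := hle b (right_mem_Icc.2 hab)
    _ ≤ c * Real.exp (F b) := by
      rwa [Real.exp_neg, ← div_eq_mul_inv, div_le_iff₀ (Real.exp_pos _)] at this

theorem norm_sub_le_integral_of_hasDerivAt_of_norm_le {E : Type*} [NormedAddCommGroup E]
    [NormedSpace ℝ E] {u u' : ℝ → E} {B : ℝ → ℝ} {a b : ℝ} (hab : a ≤ b)
    (hu : ∀ t ∈ Icc a b, HasDerivAt u (u' t) t) (hB : ∀ t ∈ Icc a b, ‖u' t‖ ≤ B t)
    (hBi : IntervalIntegrable B volume a b) :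
    ‖u b - u a‖ ≤ ∫ t in a..b, B t :=
  norm_sub_le_integral_of_norm_deriv_le_of_le hab
    (fun t ht ↦ (hu t ht).continuousAt.continuousWithinAt)
    (fun t ht ↦ (hu t (Ioo_subset_Icc_self ht)).differentiableAt.differentiableWithinAt)
    (ae_of_all _ fun t ht ↦ (hu t (Ioo_subset_Icc_self ht)).deriv ▸ hB t (Ioo_subset_Icc_self ht))
    hBi

theorem hasDerivAt_cexp_neg_mul_smul {E : Type*} [NormedAddCommGroup E] [NormedSpace ℂ E]
    {u : ℝ → E} {κ : ℂ} {v : E} {t : ℝ} (hu : HasDerivAt u (κ • u t + v) t) :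
    HasDerivAt (fun s : ℝ ↦ cexp (-(κ * s)) • u s) (cexp (-(κ * t)) • v) t := by
  have hexp : HasDerivAt (fun s : ℝ ↦ cexp (-(κ * s))) (cexp (-(κ * t)) * -κ) t := by
    simpa using ((hasDerivAt_id (t : ℂ)).const_mul κ).neg.cexp.comp_ofReal
  refine (hexp.smul hu).congr_deriv ?_
  rw [mul_smul, ← smul_add, neg_smul, add_neg_cancel_comm]

theorem norm_le_mul_exp_integral_of_norm_deriv_le {E : Type*} [NormedAddCommGroup E]
    [NormedSpace ℝ E] {u u' : ℝ → E} {g : ℝ → ℝ} {a b : ℝ} (hab : a ≤ b)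
    (hu : ∀ t ∈ Icc a b, HasDerivAt u (u' t) t) (hg : IntervalIntegrable g volume a b)
    (hg₀ : ∀ t ∈ Icc a b, 0 ≤ g t) (hu' : ∀ t ∈ Icc a b, ‖u' t‖ ≤ g t * ‖u t‖) :
    ‖u b‖ ≤ ‖u a‖ * Real.exp (∫ t in a..b, g t) := by
  have hcont : ContinuousOn (fun t ↦ ‖u t‖) (Icc a b) :=
    fun t ht ↦ (hu t ht).continuousAt.norm.continuousWithinAt
  have hgu : IntervalIntegrable (fun t ↦ g t * ‖u t‖) volume a b :=
    hg.mul_continuousOn (by rwa [uIcc_of_le hab])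
  refine le_mul_exp_integral_of_le_add_integral hab hg hg₀ hcont fun t ht ↦ ?_
  have hsub : Icc a t ⊆ Icc a b := Icc_subset_Icc_right ht.2
  calc ‖u t‖ ≤ ‖u a‖ + ‖u t - u a‖ := norm_le_norm_add_norm_sub' _ _
    _ ≤ ‖u a‖ + ∫ s in a..t, g s * ‖u s‖ := by
      gcongr
      refine norm_sub_le_integral_of_hasDerivAt_of_norm_le ht.1 (fun s hs ↦ hu s (hsub hs))
        (fun s hs ↦ hu' s (hsub hs)) (hgu.mono_set ?_)
      rw [uIcc_of_le ht.1, uIcc_of_le hab]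
      exact hsub

theorem norm_le_exp_mul_of_hasDerivAt_smul_add {E : Type*} [NormedAddCommGroup E]
    [NormedSpace ℂ E] {u v : ℝ → E} {κ : ℂ} {g : ℝ → ℝ} {a b : ℝ} (hab : a ≤ b)
    (hu : ∀ t ∈ Icc a b, HasDerivAt u (κ • u t + v t) t) (hg : IntervalIntegrable g volume a b)
    (hg₀ : ∀ t ∈ Icc a b, 0 ≤ g t) (hv : ∀ t ∈ Icc a b, ‖v t‖ ≤ g t * ‖u t‖) :
    ‖u b‖ ≤ Real.exp ((b - a) * κ.re + ∫ t in a..b, g t) * ‖u a‖ := by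
  have hnorm (s : ℝ) : ‖cexp (-(κ * s))‖ = Real.exp (-(κ.re * s)) := by simp [norm_exp]
  have key := norm_le_mul_exp_integral_of_norm_deriv_le hab
    (fun t ht ↦ hasDerivAt_cexp_neg_mul_smul (hu t ht)) hg hg₀ fun t ht ↦ by
      rw [norm_smul, norm_smul, mul_left_comm]
      exact mul_le_mul_of_nonneg_left (hv t ht) (norm_nonneg _)
  simp only [norm_smul, hnorm] at key
  calc ‖u b‖ = Real.exp (κ.re * b) * (Real.exp (-(κ.re * b)) * ‖u b‖) := by
        rw [← mul_assoc, ← Real.exp_add, add_neg_cancel, Real.exp_zero, one_mul]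
    _ ≤ Real.exp (κ.re * b) * (Real.exp (-(κ.re * a)) * ‖u a‖ * Real.exp (∫ t in a..b, g t)) := by
        gcongr
    _ = Real.exp ((b - a) * κ.re + ∫ t in a..b, g t) * ‖u a‖ := by
        rw [show (b - a) * κ.re + ∫ t in a..b, g t
          = κ.re * b + -(κ.re * a) + ∫ t in a..b, g t by ring, Real.exp_add, Real.exp_add]
        ring

theorem norm_cexp_I_mul_ofReal_mul_le (z : ℂ) {s : ℝ} (hs : 0 ≤ s) :
    ‖cexp (I * s * z)‖ ≤ Real.exp (s * |z.im|) := by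
  have hre : (I * s * z).re = s * -z.im := by simp [mul_re, mul_im]
  rw [norm_exp, Real.exp_le_exp, hre]
  exact mul_le_mul_of_nonneg_left (neg_le_abs z.im) hs

theorem norm_le_exp_mul_of_hasDerivAt_I_mul_add {z : ℂ} {f G H : ℝ → ℂ} {a b : ℝ} (hab : a ≤ b)
    (hf : IntervalIntegrable f volume a b)
    (hH : ∀ t ∈ Icc a b, HasDerivAt H (I * z * H t + f t * G t) t)
    (hGH : ∀ t ∈ Icc a b, ‖G t‖ ≤ ‖H t‖) :
    ∀ s ∈ Icc a b, ‖H s‖ ≤ Real.exp ((b - a) * |z.im| + ∫ t in a..b, ‖f t‖) * ‖H a‖ := by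
  intro s hs
  have hsub : Icc a s ⊆ Icc a b := Icc_subset_Icc_right hs.2
  refine (norm_le_exp_mul_of_hasDerivAt_smul_add hs.1 (fun t ht ↦ hH t (hsub ht))
    (hf.norm.mono_set (by rw [uIcc_of_le hs.1, uIcc_of_le hab]; exact hsub))
    (fun t _ ↦ norm_nonneg _)
    (fun t ht ↦ (norm_mul_le _ _).trans (by gcongr; exact hGH t (hsub ht)))).trans ?_
  have hre : (s - a) * (I * z).re ≤ (b - a) * |z.im| := by
    simp only [mul_re, I_re, I_im, zero_mul, one_mul, zero_sub]
    nlinarith [neg_le_abs z.im, abs_nonneg z.im, hs.1, hs.2]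
  have hF : ∫ t in a..s, ‖f t‖ ≤ ∫ t in a..b, ‖f t‖ :=
    intervalIntegral.integral_mono_interval le_rfl hs.1 hs.2 (ae_of_all _ fun _ ↦ norm_nonneg _)
      hf.norm
  gcongr

theorem norm_sub_le_of_hasDerivAt_neg_I_mul_add {z : ℂ} {f G H : ℝ → ℂ} {a b C : ℝ}
    (ha : 0 ≤ a) (hab : a ≤ b) (hf : IntervalIntegrable f volume a b)
    (hG : ∀ t ∈ Icc a b, HasDerivAt G (-I * z * G t + (starRingEnd ℂ) (f t) * H t) t)
    (hH : ∀ t ∈ Icc a b, ‖H t‖ ≤ C) :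
    ‖cexp (I * b * z) * G b - cexp (I * a * z) * G a‖ ≤
      Real.exp (b * |z.im|) * C * ∫ t in a..b, ‖f t‖ := by
  have hexp (t : ℝ) : -(-I * z * t) = I * t * z := by ring
  have hderiv (t : ℝ) (ht : t ∈ Icc a b) : HasDerivAt (fun s : ℝ ↦ cexp (I * s * z) * G s)
      (cexp (I * t * z) * ((starRingEnd ℂ) (f t) * H t)) t := by
    simpa only [smul_eq_mul, hexp] using hasDerivAt_cexp_neg_mul_smul (κ := -I * z) (hG t ht)
  have hbound (t : ℝ) (ht : t ∈ Icc a b) :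
      ‖cexp (I * t * z) * ((starRingEnd ℂ) (f t) * H t)‖ ≤
        ‖f t‖ * (Real.exp (b * |z.im|) * C) := by
    rw [norm_mul, norm_mul, norm_conj, mul_left_comm]
    gcongr
    · exact (norm_cexp_I_mul_ofReal_mul_le z (ha.trans ht.1)).trans
        (Real.exp_le_exp.2 (mul_le_mul_of_nonneg_right ht.2 (abs_nonneg _)))
    · exact hH t ht
  refine (norm_sub_le_integral_of_hasDerivAt_of_norm_le hab hderiv hbound
    (hf.norm.mul_const _)).trans_eq ?_
  rw [intervalIntegral.integral_mul_const, mul_comm]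

theorem gronwall_for_scattering_function_general
    (z : ℂ) (f G H : ℝ → ℂ)
    (hf : LocallyIntegrableOn f (Set.Ici 0))
    (t₁ t₂ : ℝ) (ht₁ : 0 ≤ t₁) (ht : t₁ ≤ t₂)
    (hG : ∀ t ∈ Set.Icc t₁ t₂,
      HasDerivAt G (-Complex.I * z * G t + (starRingEnd ℂ) (f t) * H t) t)
    (hH : ∀ t ∈ Set.Icc t₁ t₂,
      HasDerivAt H (Complex.I * z * H t + f t * G t) t)
    (hHB : ∀ t ∈ Set.Icc t₁ t₂, ‖G t‖ ≤ ‖H t‖) :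
    ‖Complex.exp (Complex.I * t₂ * z) * G t₂ -
        Complex.exp (Complex.I * t₁ * z) * G t₁‖ ≤
      ‖H t₁‖ *
        Real.exp ((2 * t₂ - t₁) * |z.im| + ∫ s in t₁..t₂, ‖f s‖) *
        ∫ s in t₁..t₂, ‖f s‖ := by
  set F := ∫ s in t₁..t₂, ‖f s‖
  have hfi : IntervalIntegrable f volume t₁ t₂ :=
    (intervalIntegrable_iff_integrableOn_Icc_of_le ht).2
      (hf.integrableOn_compact_subset (fun _ hs ↦ ht₁.trans hs.1) isCompact_Icc)
  calc _ ≤ Real.exp (t₂ * |z.im|) * (Real.exp ((t₂ - t₁) * |z.im| + F) * ‖H t₁‖) * F :=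
        norm_sub_le_of_hasDerivAt_neg_I_mul_add ht₁ ht hfi hG
          (norm_le_exp_mul_of_hasDerivAt_I_mul_add ht hfi hH hHB)
    _ = ‖H t₁‖ * Real.exp ((2 * t₂ - t₁) * |z.im| + F) * F := by
        rw [show (2 * t₂ - t₁) * |z.im| + F = t₂ * |z.im| + ((t₂ - t₁) * |z.im| + F) by ring,
          Real.exp_add (t₂ * |z.im|)]
        ring

/-- Gronwall-type bound for the scattering function
`𝓔(t) = e^{itz} G(t)` of the Dirac-type system in the closed lower half-plane. -/
theorem gronwall_for_scattering_function
    (z : ℂ) (hz : z.im ≤ 0) (f G H : ℝ → ℂ)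
    (hf : LocallyIntegrableOn f (Set.Ici 0))
    (t₁ t₂ : ℝ) (ht₁ : 0 ≤ t₁) (ht : t₁ ≤ t₂)
    (hG : ∀ t ∈ Set.Icc t₁ t₂,
      HasDerivAt G (-Complex.I * z * G t + (starRingEnd ℂ) (f t) * H t) t)
    (hH : ∀ t ∈ Set.Icc t₁ t₂,
      HasDerivAt H (Complex.I * z * H t + f t * G t) t)
    (hHB : ∀ t ∈ Set.Icc t₁ t₂, ‖G t‖ ≤ ‖H t‖) :
    ‖Complex.exp (Complex.I * t₂ * z) * G t₂ -
        Complex.exp (Complex.I * t₁ * z) * G t₁‖ ≤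
      ‖H t₁‖ *
        Real.exp ((2 * t₂ - t₁) * |z.im| + ∫ s in t₁..t₂, ‖f s‖) *
        ∫ s in t₁..t₂, ‖f s‖ :=
  gronwall_for_scattering_function_general z f G H hf t₁ t₂ ht₁ ht hG hH hHB
end

section
/- (Direction concentration on σ-intervals.) Let σ > 0, let I ⊂ ℝ be an interval, and let f : I → ℂ be integrable with |∫_I f(t) dt| ≥ (1 − σ) ∫_I |f(t)| dt. Then there exists φ ∈ [0, 2π] such that | ∫_I f(t) · 1_{S_φ}(t) dt | ≥ (1 − 3·10⁴ σ) ∫_I |f(t)| dt, where S_φ := { t ∈ I : f(t) ≠ 0 and the argument of e^{−iφ} f(t), taken in [0, 2π), lies in [0, π/4] }. -/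
/-!
Let `θ = arg ∫ f` and take the sector of aperture `π/4` centred at `θ`. Outside it the component
of `f` along `e^{iθ}` is at most `cos (π/8) |f| ≤ (31/32) |f|`, so integrating
`|f| - Re (e^{-iθ} f)` gives `∫_{outside} |f| ≤ 32 (∫ |f| - |∫ f|) ≤ 32 σ ∫ |f|`.
Removing this part from `∫ f` costs at most that much, leaving `(1 - 33 σ) ∫ |f|` on the sector.
-/

open MeasureTheory Complex Set

/-- The paper's `S_φ` is `f ⁻¹' angularSector φ (π / 4)`. -/
def angularSector (φ β : ℝ) : Set ℂ :=
  {z | z ≠ 0 ∧ arg (exp (-I * φ) * z) ∈ Icc 0 β}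

lemma measurableSet_angularSector (φ β : ℝ) : MeasurableSet (angularSector φ β) :=
  (measurableSet_singleton 0).compl.inter
    (measurable_arg.comp (measurable_const_mul _) measurableSet_Icc)

lemma angularSector_congr {φ ψ : ℝ} (h : exp (-I * φ) = exp (-I * ψ)) (β : ℝ) :
    angularSector φ β = angularSector ψ β := by
  simp only [angularSector, h]

lemma exists_mem_Icc_exp_neg_mul_I_eq (ψ : ℝ) :
    ∃ φ ∈ Icc 0 (2 * Real.pi), exp (-I * φ) = exp (-I * ψ) := by
  refine ⟨toIcoMod Real.two_pi_pos 0 ψ, ?_, ?_⟩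
  · have h := toIcoMod_mem_Ico Real.two_pi_pos 0 ψ
    rw [zero_add] at h
    exact Ico_subset_Icc_self h
  · refine exp_eq_exp_iff_exists_int.2 ⟨toIcoDiv Real.two_pi_pos 0 ψ, ?_⟩
    have h := toIcoMod_sub_self_eq_mul Real.two_pi_pos 0 ψ
    rw [sub_eq_iff_eq_add'] at h
    rw [h]
    push_cast
    ring

lemma Real.cos_sub_half_le_cos_half {x β : ℝ} (hβ₀ : 0 ≤ β) (hβ : β ≤ Real.pi)
    (hx₁ : -Real.pi < x) (hx₂ : x ≤ Real.pi) (hx : x ∉ Icc 0 β) :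
    Real.cos (x - β / 2) ≤ Real.cos (β / 2) := by
  rcases lt_or_ge x 0 with hneg | hnonneg
  · rw [← Real.cos_neg, neg_sub]
    rcases le_or_gt (β / 2 - x) Real.pi with hle | hgt
    · exact Real.cos_le_cos_of_nonneg_of_le_pi (by linarith) hle (by linarith)
    · calc Real.cos (β / 2 - x) ≤ 0 :=
            Real.cos_nonpos_of_pi_div_two_le_of_le (by linarith) (by linarith)
        _ ≤ Real.cos (β / 2) :=
            Real.cos_nonneg_of_neg_pi_div_two_le_of_le (by linarith) (by linarith)
  · have hβx : β < x := lt_of_not_ge fun h ↦ hx ⟨hnonneg, h⟩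
    exact Real.cos_le_cos_of_nonneg_of_le_pi (by linarith) (by linarith) (by linarith)

lemma re_exp_neg_mul_I_mul (α : ℝ) (w : ℂ) :
    (exp (-I * α) * w).re = ‖w‖ * Real.cos (arg w - α) := by
  rw [Real.cos_sub, mul_add, ← mul_assoc, ← mul_assoc, norm_mul_cos_arg, norm_mul_sin_arg]
  simp [mul_re, exp_re, exp_im]
  ring

lemma re_exp_mul_le_cos_mul_norm_of_notMem_angularSector {φ β : ℝ} (hβ₀ : 0 ≤ β)
    (hβ : β ≤ Real.pi) {z : ℂ} (hz : z ∉ angularSector φ β) :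
    (exp (-I * ↑(φ + β / 2)) * z).re ≤ Real.cos (β / 2) * ‖z‖ := by
  by_cases hz₀ : z = 0
  · simp [hz₀]
  set w := exp (-I * φ) * z
  have hw : ‖w‖ = ‖z‖ := by simp [w, norm_exp]
  have hrot : exp (-I * ↑(φ + β / 2)) * z = exp (-I * ↑(β / 2)) * w := by
    rw [← mul_assoc, ← Complex.exp_add]
    push_cast
    ring_nf
  have hcos := Real.cos_sub_half_le_cos_half hβ₀ hβ (neg_pi_lt_arg w) (arg_le_pi w)
    fun h ↦ hz ⟨hz₀, h⟩
  rw [hrot, re_exp_neg_mul_I_mul, hw, mul_comm (Real.cos _)]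
  exact mul_le_mul_of_nonneg_left hcos (norm_nonneg z)

lemma Real.cos_pi_div_eight_le : Real.cos (Real.pi / 8) ≤ 31 / 32 := by
  have hπ := Real.pi_pos
  have h := Real.cos_le_one_sub_mul_cos_sq (x := Real.pi / 8)
    (by rw [abs_of_pos (by positivity)]; linarith)
  calc Real.cos (Real.pi / 8) ≤ 1 - 2 / Real.pi ^ 2 * (Real.pi / 8) ^ 2 := h
    _ = 31 / 32 := by field_simp; ring

section Integral

variable {α : Type*} [MeasurableSpace α] {μ : Measure α}

lemma MeasureTheory.Integrable.indicator_preimage {E : Type*} [NormedAddCommGroup E]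
    [MeasurableSpace E] [BorelSpace E] [SecondCountableTopology E] {f : α → E}
    (hf : Integrable f μ) {K : Set E} (hK : MeasurableSet K) :
    Integrable ((f ⁻¹' K).indicator f) μ := by
  refine hf.mono ?_ (ae_of_all _ fun t ↦ norm_indicator_le_norm_self f t)
  have hcomp : (f ⁻¹' K).indicator f = K.indicator id ∘ f :=
    funext fun _ ↦ indicator_comp_right (g := id) f
  rw [hcomp]
  exact ((measurable_id.indicator hK).comp_aemeasurable hf.aemeasurable).aestronglyMeasurable

lemma norm_integral_sub_integral_norm_indicator_compl_le {E : Type*} [NormedAddCommGroup E]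
    [NormedSpace ℝ E] {f : α → E} {S : Set α} (hf : Integrable f μ)
    (hS : Integrable (S.indicator f) μ) :
    ‖∫ t, f t ∂μ‖ - ∫ t, ‖Sᶜ.indicator f t‖ ∂μ ≤ ‖∫ t, S.indicator f t ∂μ‖ := by
  have hSc : Integrable (Sᶜ.indicator f) μ := by
    rw [indicator_compl]
    exact hf.sub hS
  have hsplit : ∫ t, f t ∂μ = ∫ t, S.indicator f t ∂μ + ∫ t, Sᶜ.indicator f t ∂μ := by
    rw [← integral_add hS hSc]
    simp only [indicator_self_add_compl_apply]
  have hSc_norm := norm_integral_le_integral_norm (μ := μ) (Sᶜ.indicator f)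
  have htri := norm_add_le (∫ t, S.indicator f t ∂μ) (∫ t, Sᶜ.indicator f t ∂μ)
  rw [hsplit]
  linarith

variable {f : α → ℂ}

lemma integral_re_exp_neg_arg_mul (hf : Integrable f μ) :
    ∫ t, (exp (-I * arg (∫ t, f t ∂μ)) * f t).re ∂μ = ‖∫ t, f t ∂μ‖ := by
  have hint := integral_re (hf.const_mul (exp (-I * arg (∫ t, f t ∂μ))))
  rw [integral_const_mul] at hint
  simp only [RCLike.re_to_complex] at hint
  rw [hint]
  conv_lhs => rw [← norm_mul_exp_arg_mul_I (∫ t, f t ∂μ)]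
  rw [mul_left_comm, ← Complex.exp_add]
  simp [mul_comm I]

lemma one_sub_mul_integral_norm_indicator_compl_le (hf : Integrable f μ) {K : Set ℂ}
    (hK : MeasurableSet K) {c : ℝ}
    (hc : ∀ z ∉ K, (exp (-I * arg (∫ t, f t ∂μ)) * z).re ≤ c * ‖z‖) :
    (1 - c) * ∫ t, ‖(f ⁻¹' K)ᶜ.indicator f t‖ ∂μ ≤ ∫ t, ‖f t‖ ∂μ - ‖∫ t, f t ∂μ‖ := by
  set u := exp (-I * arg (∫ t, f t ∂μ))
  have hpoint : ∀ t, (1 - c) * ‖(f ⁻¹' K)ᶜ.indicator f t‖ ≤ ‖f t‖ - (u * f t).re := by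
    intro t
    have hle : (u * f t).re ≤ ‖f t‖ := by
      simpa [u, norm_exp] using re_le_norm (u * f t)
    by_cases ht : f t ∈ K
    · rw [indicator_of_notMem (by simpa using ht), norm_zero, mul_zero]
      linarith
    · rw [indicator_of_mem (by simpa using ht)]
      linarith [hc _ ht]
  have hSc : Integrable ((f ⁻¹' K)ᶜ.indicator f) μ := hf.indicator_preimage hK.compl
  have hre : Integrable (fun t ↦ (u * f t).re) μ := (hf.const_mul u).re
  calc (1 - c) * ∫ t, ‖(f ⁻¹' K)ᶜ.indicator f t‖ ∂μ
      = ∫ t, (1 - c) * ‖(f ⁻¹' K)ᶜ.indicator f t‖ ∂μ := (integral_const_mul _ _).symm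
    _ ≤ ∫ t, (‖f t‖ - (u * f t).re) ∂μ :=
        integral_mono (hSc.norm.const_mul _) (hf.norm.sub hre) hpoint
    _ = ∫ t, ‖f t‖ ∂μ - ‖∫ t, f t ∂μ‖ := by
        rw [integral_sub hf.norm hre, integral_re_exp_neg_arg_mul hf]

end Integral

theorem direction_concentration_on_sigma_interval_general
    (σ : ℝ) (I : Set ℝ)
    (f : ℝ → ℂ) (hf : IntegrableOn f I)
    (h : (1 - σ) * (∫ t in I, ‖f t‖) ≤ ‖∫ t in I, f t‖) :
    ∃ φ ∈ Set.Icc (0 : ℝ) (2 * Real.pi),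
      (1 - 3 * 10 ^ 4 * σ) * (∫ t in I, ‖f t‖) ≤
        ‖∫ t in I,
          Set.indicator {u : ℝ | f u ≠ 0 ∧
            Complex.arg (Complex.exp (-Complex.I * (φ : ℂ)) * f u) ∈ Set.Icc 0 (Real.pi / 4)}
            f t‖ := by
  set θ := arg (∫ t in I, f t)
  obtain ⟨φ, hφ, hexp⟩ := exists_mem_Icc_exp_neg_mul_I_eq (θ - Real.pi / 8)
  refine ⟨φ, hφ, ?_⟩
  change _ ≤ ‖∫ t in I, (f ⁻¹' angularSector φ (Real.pi / 4)).indicator f t‖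
  rw [angularSector_congr hexp]
  have hK := measurableSet_angularSector (θ - Real.pi / 8) (Real.pi / 4)
  have hout : ∀ z ∉ angularSector (θ - Real.pi / 8) (Real.pi / 4),
      (exp (-Complex.I * θ) * z).re ≤ 31 / 32 * ‖z‖ := fun z hz ↦ by
    have hcos := re_exp_mul_le_cos_mul_norm_of_notMem_angularSector (by positivity)
      (by linarith [Real.pi_pos]) hz
    rw [show Real.pi / 4 / 2 = Real.pi / 8 by ring, sub_add_cancel] at hcos
    exact hcos.trans (mul_le_mul_of_nonneg_right Real.cos_pi_div_eight_le (norm_nonneg z))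
  have hmass := one_sub_mul_integral_norm_indicator_compl_le hf hK hout
  have hsplit := norm_integral_sub_integral_norm_indicator_compl_le hf (hf.indicator_preimage hK)
  have hnorm := norm_integral_le_integral_norm (μ := volume.restrict I) f
  linarith

/-- on a `σ`-interval, a single angular sector of aperture `π/4` captures
almost the full `L¹` mass of `f`. The argument "taken in `[0, 2π)`" lies in `[0, π/4]`
exactly when `Complex.arg` (valued in `(-π, π]`) lies in `[0, π/4]`. -/
theorem direction_concentration_on_sigma_interval
    (σ : ℝ) (hσ : 0 < σ) (I : Set ℝ) (hI : I.OrdConnected)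
    (f : ℝ → ℂ) (hf : IntegrableOn f I)
    (h : (1 - σ) * (∫ t in I, ‖f t‖) ≤ ‖∫ t in I, f t‖) :
    ∃ φ ∈ Set.Icc (0 : ℝ) (2 * Real.pi),
      (1 - 3 * 10 ^ 4 * σ) * (∫ t in I, ‖f t‖) ≤
        ‖∫ t in I,
          Set.indicator {u : ℝ | f u ≠ 0 ∧
            Complex.arg (Complex.exp (-Complex.I * (φ : ℂ)) * f u) ∈ Set.Icc 0 (Real.pi / 4)}
            f t‖ :=
  direction_concentration_on_sigma_interval_general σ I f hf h
end

section
/- (Sinc-square kernel is dominated by the maximal function.) There exists an absolute constant C > 0 such that for every t > 0, every s ∈ ℝ, every λ ∈ ℂ, and every locally integrable g : ℝ → ℂ, ∫_ℝ | sinc(t,λ,x) |² |g(x)| dx ≤ C · 𝓥_{s,t}(λ) · M g (s), where M g is the Hardy–Littlewood maximal function of g. -/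
open MeasureTheory Complex
open scoped ENNReal NNReal

/-- The reproducing kernel of the Paley–Wiener space `PW_t`:
`sinc (t, λ, z) = sin (t (z - conj λ)) / (π (z - conj λ))`, with the
removable-singularity value `t / π` at `z = conj λ`. -/
noncomputable def pwSinc (t : ℝ) (l z : ℂ) : ℂ :=
  if z = (starRingEnd ℂ) l then ((t / Real.pi : ℝ) : ℂ)
  else Complex.sin (t * (z - (starRingEnd ℂ) l)) / (Real.pi * (z - (starRingEnd ℂ) l))

/-- `𝓧_{s,t}(λ) = max (1, t |Re λ - s| / (t |Im λ| + 1))`. -/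
noncomputable def XX (s t : ℝ) (l : ℂ) : ℝ :=
  max 1 (t * |l.re - s| / (t * |l.im| + 1))

/-- `𝓥_{s,t}(λ) = 𝓧_{s,t}(λ) · sinc (t, λ, λ)`. -/
noncomputable def VV (s t : ℝ) (l : ℂ) : ℝ :=
  XX s t l * (pwSinc t l l).re

/-- The Hardy–Littlewood maximal function
`M g (s) = sup_{r > 0} (2r)⁻¹ ∫_{s-r}^{s+r} |g|`. -/
noncomputable def HLMax (g : ℝ → ℂ) (s : ℝ) : ℝ≥0∞ :=
  ⨆ (r : ℝ) (_ : 0 < r),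
    (ENNReal.ofReal (2 * r))⁻¹ * ∫⁻ x in Set.Ioo (s - r) (s + r), (‖g x‖₊ : ℝ≥0∞)

/-!
Scaling by `t`, with `v = t (x - Re λ)` and `c = t |Im λ|`, gives
`|sinc(t,λ,x)|² = t² (sin² v + sinh² c) / (π² (v² + c²))` and
`π sinc(t,λ,λ) / t = sinh c cosh c / c ≥ 1`; elementary inequalities then bound the kernel by
`sinc(t,λ,λ)` times a Poisson kernel centred at `Re λ` of height `h = |Im λ| + 1/t`. Moving the
centre to `s` costs the factor `𝓧_{s,t}(λ)`, because `|Re λ - s| ≤ 𝓧_{s,t}(λ) h`. Finally a Poisson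
kernel of height `H` centred at `s` is dominated by `∑ₖ 4^{1-k} H⁻¹ 𝟙_{|x - s| < 2ᵏH}`, whose
integral against `|g|` is at most `∑ₖ 8 · 2⁻ᵏ M g (s) = 16 M g (s)`.
-/

open scoped Real

lemma Real.sinh_le_mul_cosh {x : ℝ} (hx : 0 ≤ x) : Real.sinh x ≤ x * Real.cosh x := by
  have hmono : MonotoneOn (fun y : ℝ => y * Real.cosh y - Real.sinh y) (Set.Ici 0) := by
    have hderiv (y : ℝ) : HasDerivAt (fun y : ℝ => y * Real.cosh y - Real.sinh y)
        (1 * Real.cosh y + y * Real.sinh y - Real.cosh y) y :=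
      ((hasDerivAt_id y).mul (Real.hasDerivAt_cosh y)).sub (Real.hasDerivAt_sinh y)
    refine monotoneOn_of_deriv_nonneg (convex_Ici 0)
      (fun y _ => (hderiv y).continuousAt.continuousWithinAt)
      (fun y _ => (hderiv y).differentiableAt.differentiableWithinAt) fun y hy => ?_
    rw [interior_Ici, Set.mem_Ioi] at hy
    rw [(hderiv y).deriv]
    nlinarith [Real.sinh_pos_iff.2 hy]
  simpa using hmono Set.self_mem_Ici hx hx

/-- Here `σ` stands for `sinh (2c) / (2c)` (read as `1` at `c = 0`). -/
lemma sin_sq_add_sinh_sq_mul_le {v c σ : ℝ} (hc : 0 ≤ c) (hσ : 1 ≤ σ)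
    (hσc : Real.sinh c * Real.cosh c ≤ σ * c) :
    (Real.sin v ^ 2 + Real.sinh c ^ 2) * (v ^ 2 + (c + 1) ^ 2) ≤
      5 * σ * (c + 1) * (v ^ 2 + c ^ 2) := by
  set m := Real.sin v ^ 2
  have hm0 : 0 ≤ m := sq_nonneg _
  have hm1 : m ≤ 1 := Real.sin_sq_le_one v
  have hmv : m ≤ v ^ 2 := Real.sin_sq_le_sq
  have hmc : m * c ≤ v ^ 2 + c ^ 2 := by
    rcases le_total c 1 with h | h <;> nlinarith
  have hsin : m * (v ^ 2 + (c + 1) ^ 2) ≤ 3 * (c + 1) * (v ^ 2 + c ^ 2) := by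
    nlinarith [mul_le_mul_of_nonneg_left hmc (by linarith : (0:ℝ) ≤ c + 1)]
  set sh := Real.sinh c
  set ch := Real.cosh c
  have hsh : 0 ≤ sh := Real.sinh_nonneg_iff.2 hc
  have hshch : sh ≤ ch := (Real.sinh_lt_cosh c).le
  have hshc : sh * (c + 1) ≤ 2 * c * ch := by
    nlinarith [Real.sinh_le_mul_cosh hc]
  have hsinh : sh ^ 2 * (v ^ 2 + (c + 1) ^ 2) ≤ 2 * σ * (c + 1) * (v ^ 2 + c ^ 2) := by
    have hv : sh ^ 2 ≤ σ * (c + 1) := by nlinarith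
    have hc' : sh ^ 2 * (c + 1) ^ 2 ≤ 2 * σ * (c + 1) * c ^ 2 := by
      nlinarith [mul_le_mul_of_nonneg_left hshc (by positivity : 0 ≤ sh * (c + 1))]
    nlinarith [mul_le_mul_of_nonneg_right hv (sq_nonneg v)]
  nlinarith [mul_nonneg (by linarith : (0:ℝ) ≤ c + 1) (by positivity : (0:ℝ) ≤ v ^ 2 + c ^ 2)]

/-- `π` times the Poisson kernel of the upper half-plane at height `h`. -/
noncomputable def halfPlanePoisson (h u : ℝ) : ℝ := h / (u ^ 2 + h ^ 2)

lemma halfPlanePoisson_le_mul_shift {h c X : ℝ} (hh : 0 < h) (hX : 1 ≤ X) (hc : |c| ≤ X * h)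
    (u : ℝ) : halfPlanePoisson h u ≤ 6 * X * halfPlanePoisson (h + |c|) (u + c) := by
  unfold halfPlanePoisson
  have hd := abs_nonneg c
  have hshift : (u + c) ^ 2 ≤ 2 * u ^ 2 + 2 * |c| ^ 2 := by
    nlinarith [sq_nonneg (u - c), sq_abs c]
  rw [mul_div_assoc', div_le_div_iff₀ (by positivity) (by positivity)]
  have hcc : |c| ^ 2 ≤ X * h * |c| := by nlinarith
  nlinarith [mul_nonneg (mul_nonneg hh.le (sub_nonneg.2 hX)) (sq_nonneg u),
    mul_nonneg (mul_nonneg hh.le hh.le) (mul_nonneg (by linarith : (0:ℝ) ≤ X) hd),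
    mul_le_mul_of_nonneg_left hcc hh.le, mul_nonneg (sub_nonneg.2 hX) (pow_pos hh 3).le]

lemma exists_halfPlanePoisson_le_dyadic {H : ℝ} (hH : 0 < H) (w : ℝ) :
    ∃ k : ℕ, |w| < 2 ^ k * H ∧ halfPlanePoisson H w ≤ 4 / (4 ^ k * H) := by
  unfold halfPlanePoisson
  rcases lt_or_ge |w| H with hw | hw
  · refine ⟨0, by simpa using hw, ?_⟩
    rw [div_le_div_iff₀ (by positivity) (by positivity)]
    nlinarith [sq_nonneg w]
  · obtain ⟨n, hn, hn'⟩ := exists_nat_pow_near ((one_le_div hH).2 hw) one_lt_two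
    rw [le_div_iff₀ hH] at hn
    rw [div_lt_iff₀ hH] at hn'
    refine ⟨n + 1, hn', ?_⟩
    have h4 : (4 : ℝ) ^ (n + 1) = 4 * (2 ^ n) ^ 2 := by
      rw [pow_succ, mul_comm, ← pow_mul, mul_comm n, pow_mul]; norm_num
    rw [h4, div_le_div_iff₀ (by positivity) (by positivity)]
    have : (2 ^ n * H) ^ 2 ≤ w ^ 2 := by
      rw [← sq_abs w]; exact pow_le_pow_left₀ (by positivity) hn 2
    nlinarith [sq_nonneg H]

lemma lintegral_Ioo_le_HLMax (g : ℝ → ℂ) (s : ℝ) {r : ℝ} (hr : 0 < r) :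
    (∫⁻ x in Set.Ioo (s - r) (s + r), ‖g x‖ₑ) ≤ ENNReal.ofReal (2 * r) * HLMax g s := by
  rw [← ENNReal.inv_mul_le_iff (by simpa using hr) ENNReal.ofReal_ne_top]
  exact le_iSup₂ (f := fun (r : ℝ) (_ : 0 < r) => (ENNReal.ofReal (2 * r))⁻¹ *
    ∫⁻ x in Set.Ioo (s - r) (s + r), ‖g x‖ₑ) r hr

lemma lintegral_halfPlanePoisson_mul_le_HLMax {g : ℝ → ℂ} (hg : AEStronglyMeasurable g)
    (s : ℝ) {H : ℝ} (hH : 0 < H) :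
    (∫⁻ x, ENNReal.ofReal (halfPlanePoisson H (x - s)) * ‖g x‖ₑ) ≤ 16 * HLMax g s := by
  set I : ℕ → Set ℝ := fun k => Set.Ioo (s - 2 ^ k * H) (s + 2 ^ k * H)
  set c : ℕ → ℝ≥0∞ := fun k => ENNReal.ofReal (4 / (4 ^ k * H))
  have hdom (x : ℝ) : ENNReal.ofReal (halfPlanePoisson H (x - s)) * ‖g x‖ₑ ≤
      ∑' k, c k * (I k).indicator (fun x => ‖g x‖ₑ) x := by
    obtain ⟨k, hxk, hk⟩ := exists_halfPlanePoisson_le_dyadic hH (x - s)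
    have hx : x ∈ I k := by
      rw [abs_lt] at hxk
      exact ⟨by linarith, by linarith⟩
    refine le_trans ?_ (ENNReal.le_tsum k)
    rw [Set.indicator_of_mem hx]
    gcongr
    exact ENNReal.ofReal_le_ofReal hk
  have hgeom (k : ℕ) :
      c k * ENNReal.ofReal (2 * (2 ^ k * H)) = ENNReal.ofReal (16 / 2 / 2 ^ k) := by
    rw [← ENNReal.ofReal_mul (by positivity)]
    congr 1
    rw [show (4 : ℝ) ^ k = 2 ^ k * 2 ^ k by rw [← mul_pow]; norm_num]
    field_simp
    ring
  calc ∫⁻ x, ENNReal.ofReal (halfPlanePoisson H (x - s)) * ‖g x‖ₑ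
      ≤ ∫⁻ x, ∑' k, c k * (I k).indicator (fun x => ‖g x‖ₑ) x := lintegral_mono hdom
    _ = ∑' k, c k * ∫⁻ x in I k, ‖g x‖ₑ := by
      rw [lintegral_tsum fun k => (hg.enorm.indicator measurableSet_Ioo).const_mul _]
      refine tsum_congr fun k => ?_
      rw [lintegral_const_mul' _ _ ENNReal.ofReal_ne_top, lintegral_indicator measurableSet_Ioo]
    _ ≤ ∑' k, c k * (ENNReal.ofReal (2 * (2 ^ k * H)) * HLMax g s) :=
      ENNReal.tsum_le_tsum fun k => by gcongr; exact lintegral_Ioo_le_HLMax g s (by positivity)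
    _ = (∑' k, ENNReal.ofReal (16 / 2 / 2 ^ k)) * HLMax g s := by
      rw [← ENNReal.tsum_mul_right]
      exact tsum_congr fun k => by rw [← mul_assoc, hgeom]
    _ = 16 * HLMax g s := by
      rw [← ENNReal.ofReal_tsum_of_nonneg (fun _ => by positivity) (summable_geometric_two' 16),
        tsum_geometric_two']
      simp

lemma Complex.sq_norm_sin (z : ℂ) :
    ‖Complex.sin z‖ ^ 2 = Real.sin z.re ^ 2 + Real.sinh z.im ^ 2 := by
  conv_lhs => rw [← Complex.re_add_im z]
  rw [Complex.sin_add_mul_I, ← Complex.ofReal_sin, ← Complex.ofReal_cos, ← Complex.ofReal_sinh,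
    ← Complex.ofReal_cosh, ← Complex.ofReal_mul, ← Complex.ofReal_mul, Complex.sq_norm,
    Complex.normSq_add_mul_I]
  nlinarith [Real.sin_sq_add_cos_sq z.re, Real.cosh_sq z.im]

lemma sq_norm_pwSinc_ofReal {t : ℝ} {l : ℂ} {x : ℝ} (hx : (x : ℂ) ≠ (starRingEnd ℂ) l) :
    ‖pwSinc t l x‖ ^ 2 = (Real.sin (t * (x - l.re)) ^ 2 + Real.sinh (t * l.im) ^ 2) /
      (π ^ 2 * ((x - l.re) ^ 2 + l.im ^ 2)) := by
  rw [pwSinc, if_neg hx, norm_div, div_pow, Complex.sq_norm_sin, norm_mul,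
    mul_pow, Complex.norm_real, Real.norm_eq_abs, sq_abs, Complex.sq_norm, Complex.normSq_apply]
  simp [sq]

lemma pwSinc_self_re_of_im_ne_zero (t : ℝ) {l : ℂ} (hb : l.im ≠ 0) :
    (pwSinc t l l).re = Real.sinh (2 * t * |l.im|) / (2 * π * |l.im|) := by
  have hne : l ≠ (starRingEnd ℂ) l := by
    rwa [ne_eq, eq_comm, Complex.conj_eq_iff_im]
  have harg : (t : ℂ) * (l - (starRingEnd ℂ) l) = ((2 * t * l.im : ℝ) : ℂ) * Complex.I := by
    rw [Complex.sub_conj]; push_cast; ring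
  rw [pwSinc, if_neg hne, harg, Complex.sin_mul_I, ← Complex.ofReal_sinh, Complex.sub_conj]
  have hπ : (π : ℂ) ≠ 0 := Complex.ofReal_ne_zero.2 Real.pi_ne_zero
  have hb' : (l.im : ℂ) ≠ 0 := Complex.ofReal_ne_zero.2 hb
  rw [show ((Real.sinh (2 * t * l.im) : ℝ) : ℂ) * Complex.I / (π * ((2 * l.im : ℝ) * Complex.I)) =
      ((Real.sinh (2 * t * l.im) / (2 * π * l.im) : ℝ) : ℂ) by push_cast; field_simp,
    Complex.ofReal_re]
  rcases abs_cases l.im with ⟨h, _⟩ | ⟨h, _⟩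
  · rw [h]
  · rw [h, mul_neg, Real.sinh_neg, mul_neg, neg_div_neg_eq]

lemma pi_mul_pwSinc_self_re_mul_abs_im (t : ℝ) (l : ℂ) :
    π * (pwSinc t l l).re * |l.im| = Real.sinh (t * |l.im|) * Real.cosh (t * |l.im|) := by
  rcases eq_or_ne l.im 0 with hb | hb
  · simp [hb]
  · rw [pwSinc_self_re_of_im_ne_zero t hb, mul_assoc 2 t, Real.sinh_two_mul]
    field_simp

lemma le_pi_mul_pwSinc_self_re {t : ℝ} (ht : 0 ≤ t) (l : ℂ) : t ≤ π * (pwSinc t l l).re := by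
  rcases eq_or_ne l.im 0 with hb | hb
  · rw [pwSinc, if_pos (by rwa [eq_comm, Complex.conj_eq_iff_im]), Complex.ofReal_re]
    exact (mul_div_cancel₀ t Real.pi_ne_zero).ge
  · have hb' : 0 < |l.im| := abs_pos.2 hb
    rw [pwSinc_self_re_of_im_ne_zero t hb, mul_div_assoc', le_div_iff₀ (by positivity)]
    nlinarith [Real.self_le_sinh_iff.2 (by positivity : 0 ≤ 2 * t * |l.im|), Real.pi_pos]

lemma pwSinc_self_re_nonneg {t : ℝ} (ht : 0 ≤ t) (l : ℂ) : 0 ≤ (pwSinc t l l).re :=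
  nonneg_of_mul_nonneg_right (ht.trans (le_pi_mul_pwSinc_self_re ht l)) Real.pi_pos

lemma sq_norm_pwSinc_le_of_ne {t : ℝ} (ht : 0 < t) {l : ℂ} {x : ℝ}
    (hx : (x : ℂ) ≠ (starRingEnd ℂ) l) :
    ‖pwSinc t l x‖ ^ 2 ≤
      5 / π * (pwSinc t l l).re * halfPlanePoisson (|l.im| + 1 / t) (x - l.re) := by
  unfold halfPlanePoisson
  set S := (pwSinc t l l).re
  set c := t * |l.im|
  set v := t * (x - l.re)
  have hc : 0 ≤ c := by positivity
  have hσ : 1 ≤ π * S / t := by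
    rw [le_div_iff₀ ht, one_mul]; exact le_pi_mul_pwSinc_self_re ht.le l
  have hσc : Real.sinh c * Real.cosh c ≤ π * S / t * c := by
    rw [← pi_mul_pwSinc_self_re_mul_abs_im t l]; exact le_of_eq (by simp only [S, c]; field_simp)
  have key := sin_sq_add_sinh_sq_mul_le (v := v) hc hσ hσc
  have hsinh : Real.sinh (t * l.im) ^ 2 = Real.sinh c ^ 2 := by
    rw [← sq_abs, Real.abs_sinh, abs_mul, abs_of_pos ht]
  set h := |l.im| + 1 / t
  set B := (x - l.re) ^ 2 + l.im ^ 2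
  set U := (x - l.re) ^ 2 + h ^ 2
  have hB : 0 < B := by
    simpa [B, Complex.normSq_apply, sq] using Complex.normSq_pos.2 (sub_ne_zero.2 hx)
  have hU : 0 < U := by positivity
  have hc1 : c + 1 = t * h := by simp only [c, h]; field_simp
  have hvc1 : v ^ 2 + (c + 1) ^ 2 = t ^ 2 * U := by rw [hc1]; simp only [v, U]; ring
  have hvc : v ^ 2 + c ^ 2 = t ^ 2 * B := by
    simp only [v, c, B]; rw [mul_pow t |l.im|, sq_abs]; ring
  rw [hvc1, hc1, hvc] at key
  rw [sq_norm_pwSinc_ofReal hx, hsinh, div_le_iff₀ (by positivity),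
    show 5 / π * S * (h / U) * (π ^ 2 * B) = 5 * π * S * h * B / U by field_simp, le_div_iff₀ hU]
  refine le_of_mul_le_mul_right ?_ (by positivity : 0 < t ^ 2)
  calc (Real.sin v ^ 2 + Real.sinh c ^ 2) * U * t ^ 2
      = (Real.sin v ^ 2 + Real.sinh c ^ 2) * (t ^ 2 * U) := by ring
    _ ≤ 5 * (π * S / t) * (t * h) * (t ^ 2 * B) := key
    _ = 5 * π * S * h * B * t ^ 2 := by field_simp

lemma sq_norm_pwSinc_le {t : ℝ} (ht : 0 < t) (l : ℂ) (x : ℝ) :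
    ‖pwSinc t l x‖ ^ 2 ≤
      5 / π * (pwSinc t l l).re * halfPlanePoisson (|l.im| + 1 / t) (x - l.re) := by
  by_cases hx : (x : ℂ) = (starRingEnd ℂ) l
  · have hb : l.im = 0 := by simpa using (congrArg Complex.im hx).symm
    have hxa : x - l.re = 0 := by simpa [sub_eq_zero] using congrArg Complex.re hx
    rw [pwSinc, if_pos hx, pwSinc, if_pos (by rwa [eq_comm, Complex.conj_eq_iff_im]), hb, hxa,
      Complex.ofReal_re, Complex.norm_real, Real.norm_eq_abs, sq_abs, halfPlanePoisson]
    field_simp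
    norm_num
  · exact sq_norm_pwSinc_le_of_ne ht hx

lemma one_le_XX (s t : ℝ) (l : ℂ) : 1 ≤ XX s t l := le_max_left _ _

lemma abs_re_sub_le_XX_mul {t : ℝ} (ht : 0 < t) (s : ℝ) (l : ℂ) :
    |l.re - s| ≤ XX s t l * (|l.im| + 1 / t) := by
  have h := le_max_right 1 (t * |l.re - s| / (t * |l.im| + 1))
  rw [← XX, div_le_iff₀ (by positivity)] at h
  rwa [show XX s t l * (|l.im| + 1 / t) = XX s t l * (t * |l.im| + 1) / t by field_simp,
    le_div_iff₀ ht, mul_comm]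

lemma sq_norm_pwSinc_le_VV_mul {t : ℝ} (ht : 0 < t) (s : ℝ) (l : ℂ) (x : ℝ) :
    ‖pwSinc t l x‖ ^ 2 ≤
      30 / π * VV s t l * halfPlanePoisson (|l.im| + 1 / t + |l.re - s|) (x - s) := by
  have hshift := halfPlanePoisson_le_mul_shift (by positivity) (one_le_XX s t l)
    (abs_re_sub_le_XX_mul ht s l) (x - l.re)
  rw [sub_add_sub_cancel] at hshift
  calc ‖pwSinc t l x‖ ^ 2
      ≤ 5 / π * (pwSinc t l l).re * halfPlanePoisson (|l.im| + 1 / t) (x - l.re) :=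
        sq_norm_pwSinc_le ht l x
    _ ≤ 5 / π * (pwSinc t l l).re *
        (6 * XX s t l * halfPlanePoisson (|l.im| + 1 / t + |l.re - s|) (x - s)) := by
        have := pwSinc_self_re_nonneg ht.le l
        gcongr
    _ = 30 / π * VV s t l * halfPlanePoisson (|l.im| + 1 / t + |l.re - s|) (x - s) := by
        rw [VV]; ring

/-- the sinc-square kernel is dominated by the Hardy–Littlewood
maximal function. -/
theorem sinc_square_kernel_dominated_by_maximal :
    ∃ C : ℝ, 0 < C ∧
      ∀ (t : ℝ), 0 < t → ∀ (s : ℝ) (l : ℂ) (g : ℝ → ℂ),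
      LocallyIntegrable g →
      (∫⁻ x : ℝ, (‖pwSinc t l (x : ℂ)‖₊ : ℝ≥0∞) ^ 2 * (‖g x‖₊ : ℝ≥0∞)) ≤
        ENNReal.ofReal (C * VV s t l) * HLMax g s := by
  refine ⟨16 * (30 / π), by positivity, fun t ht s l g hg => ?_⟩
  set H := |l.im| + 1 / t + |l.re - s|
  have hconst : 0 ≤ 30 / π * VV s t l :=
    mul_nonneg (by positivity) (mul_nonneg (zero_le_one.trans (one_le_XX s t l))
      (pwSinc_self_re_nonneg ht.le l))
  calc (∫⁻ x : ℝ, (‖pwSinc t l (x : ℂ)‖₊ : ℝ≥0∞) ^ 2 * (‖g x‖₊ : ℝ≥0∞))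
      ≤ ∫⁻ x, ENNReal.ofReal (30 / π * VV s t l) *
          (ENNReal.ofReal (halfPlanePoisson H (x - s)) * ‖g x‖ₑ) := by
        refine lintegral_mono fun x => ?_
        show ‖pwSinc t l x‖ₑ ^ 2 * ‖g x‖ₑ ≤ _
        rw [← mul_assoc, ← ENNReal.ofReal_mul hconst, ← ofReal_norm,
          ← ENNReal.ofReal_pow (norm_nonneg _)]
        gcongr
        exact sq_norm_pwSinc_le_VV_mul ht s l x
    _ ≤ ENNReal.ofReal (30 / π * VV s t l) * (16 * HLMax g s) := by
        rw [lintegral_const_mul' _ _ ENNReal.ofReal_ne_top]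
        gcongr
        exact lintegral_halfPlanePoisson_mul_le_HLMax hg.aestronglyMeasurable s (by positivity)
    _ = ENNReal.ofReal (16 * (30 / π) * VV s t l) * HLMax g s := by
        rw [mul_assoc 16, ENNReal.ofReal_mul (by norm_num : (0 : ℝ) ≤ 16), ENNReal.ofReal_ofNat]
        ring
end

section
/- (Bilinear sinc kernel bound by the maximal function.) There exists an absolute constant C > 0 such that for every t > 0, every s ∈ ℝ, every λ, z ∈ ℂ, and every locally integrable g : ℝ → ℂ, | ∫_ℝ sinc(t,λ,x) · conj(sinc(t,z,x)) · g(x) dx | ≤ C · sqrt( 𝓥_{s,t}(λ) · 𝓥_{s,t}(z) ) · M g (s), where M g is the Hardy–Littlewood maximal function of g. -/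
/-!
On the real line `|sinc(t, λ, x)|` is at most `cosh(t Im λ) / π` times both `2t / (t |Im λ| + 1)`
and `1 / |x - Re λ|`, while `sinc(t, λ, λ) ≥ cosh(t Im λ)² · t / (π (t |Im λ| + 1))`, which rests on
`u cosh u ≤ (u + 1) sinh u`. Cutting `ℝ` into dyadic annuli around `s` whose inner radius is
`|Re λ - s| + (t |Im λ| + 1) / t`, the weight `|sinc(t, λ, ·)|²` is dominated by a geometrically
decaying sum of indicators of balls centred at `s`; each ball costs its length times `M g (s)`,
and the factor `𝓧_{s,t}(λ)` absorbs the distance from `Re λ` to `s`. This gives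
`∫ |sinc(t, λ, x)|² |g x| dx ≲ 𝓥_{s,t}(λ) M g (s)`, and Cauchy–Schwarz for the measure
`|g x| dx` yields the bilinear bound.
-/

open MeasureTheory Complex
open scoped ENNReal NNReal

lemma Real.abs_sinh_le_abs_mul_cosh (x : ℝ) : |Real.sinh x| ≤ |x| * Real.cosh x := by
  have h := (convex_uIcc 0 x).norm_image_sub_le_of_norm_deriv_le (𝕜 := ℝ) (f := Real.sinh)
    (C := Real.cosh x) (fun y _ => Real.differentiable_sinh y)
    (fun y hy => by
      rw [Real.deriv_sinh, Real.norm_eq_abs, abs_of_pos (Real.cosh_pos y), Real.cosh_le_cosh]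
      simpa using Set.abs_sub_left_of_mem_uIcc hy) Set.left_mem_uIcc Set.right_mem_uIcc
  simpa [mul_comm] using h

lemma Real.mul_cosh_le_add_one_mul_sinh (u : ℝ) :
    u * Real.cosh u ≤ (u + 1) * Real.sinh u := by
  have h := Real.add_one_le_exp (2 * u)
  rw [Real.cosh_eq, Real.sinh_eq]
  have hexp : Real.exp (2 * u) = Real.exp u * Real.exp u := by rw [two_mul, Real.exp_add]
  have hinv : Real.exp u * Real.exp (-u) = 1 := by
    rw [← Real.exp_add, add_neg_cancel, Real.exp_zero]
  nlinarith [Real.exp_pos (-u), Real.exp_pos u]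

namespace Complex

lemma norm_sin_sq (z : ℂ) : ‖sin z‖ ^ 2 = Real.sin z.re ^ 2 + Real.sinh z.im ^ 2 := by
  conv_lhs => rw [← re_add_im z]
  rw [sin_add, sin_mul_I, cos_mul_I, ← ofReal_sin, ← ofReal_cos, ← ofReal_sinh, ← ofReal_cosh,
    Complex.sq_norm, normSq_apply]
  simp only [add_re, add_im, mul_re, mul_im, ofReal_re, ofReal_im, I_re, I_im]
  nlinarith [Real.sin_sq_add_cos_sq z.re, Real.cosh_sq z.im]

lemma norm_sin_le_cosh_im (z : ℂ) : ‖sin z‖ ≤ Real.cosh z.im := by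
  refine (pow_le_pow_iff_left₀ (norm_nonneg _) (Real.cosh_pos _).le two_ne_zero).mp ?_
  rw [norm_sin_sq, Real.cosh_sq]
  nlinarith [Real.sin_sq_le_one z.re]

lemma norm_sin_le_norm_mul_cosh_im (z : ℂ) : ‖sin z‖ ≤ ‖z‖ * Real.cosh z.im := by
  refine (pow_le_pow_iff_left₀ (norm_nonneg _) (by positivity) two_ne_zero).mp ?_
  have hsinh : Real.sinh z.im ^ 2 ≤ z.im ^ 2 * Real.cosh z.im ^ 2 := by
    simpa only [sq_abs, mul_pow] using
      pow_le_pow_left₀ (abs_nonneg _) (Real.abs_sinh_le_abs_mul_cosh z.im) 2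
  rw [norm_sin_sq, mul_pow, Complex.sq_norm, normSq_apply]
  have hcosh : 1 ≤ Real.cosh z.im ^ 2 := one_le_pow₀ (Real.one_le_cosh _)
  nlinarith [Real.sin_sq_le_sq (x := z.re), mul_le_mul_of_nonneg_left hcosh (sq_nonneg z.re)]

end Complex

open scoped Real

lemma measurable_pwSinc (t : ℝ) (l : ℂ) : Measurable (pwSinc t l) :=
  Measurable.ite (measurableSet_singleton _) measurable_const (by fun_prop)

section PaleyWienerKernel

variable {t : ℝ} (l : ℂ) (x : ℝ)

lemma norm_pwSinc_mul_norm_sub_conj_le :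
    ‖pwSinc t l x‖ * ‖(x : ℂ) - starRingEnd ℂ l‖ ≤ Real.cosh (t * l.im) / π := by
  unfold pwSinc
  split_ifs with h
  · rw [h, sub_self, norm_zero, mul_zero]
    positivity
  · have hw : ‖(x : ℂ) - starRingEnd ℂ l‖ ≠ 0 := norm_ne_zero_iff.mpr (sub_ne_zero.mpr h)
    have hsin := norm_sin_le_cosh_im (t * ((x : ℂ) - starRingEnd ℂ l))
    simp only [mul_im, ofReal_re, ofReal_im, sub_im, conj_im, zero_mul, add_zero,
      zero_sub, neg_neg] at hsin
    rw [norm_div, norm_mul, norm_real, Real.norm_of_nonneg Real.pi_pos.le,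
      div_mul_eq_mul_div, mul_div_mul_right _ _ hw]
    gcongr

lemma norm_pwSinc_le (ht : 0 ≤ t) : ‖pwSinc t l x‖ ≤ t * Real.cosh (t * l.im) / π := by
  unfold pwSinc
  split_ifs with h
  · rw [norm_real, Real.norm_of_nonneg (by positivity)]
    gcongr
    exact le_mul_of_one_le_right ht (Real.one_le_cosh _)
  · have hw : ‖(x : ℂ) - starRingEnd ℂ l‖ ≠ 0 := norm_ne_zero_iff.mpr (sub_ne_zero.mpr h)
    have hsin := norm_sin_le_norm_mul_cosh_im (t * ((x : ℂ) - starRingEnd ℂ l))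
    simp only [mul_im, ofReal_re, ofReal_im, sub_im, conj_im, zero_mul, add_zero,
      zero_sub, neg_neg, norm_mul, norm_real, Real.norm_of_nonneg ht] at hsin
    rw [norm_div, norm_mul, norm_real, Real.norm_of_nonneg Real.pi_pos.le, div_le_div_iff₀
      (by positivity) Real.pi_pos]
    calc _ ≤ t * ‖(x : ℂ) - starRingEnd ℂ l‖ * Real.cosh (t * l.im) * π := by gcongr
      _ = _ := by ring

lemma norm_pwSinc_le_two_mul_div_add_one (ht : 0 ≤ t) :
    ‖pwSinc t l x‖ ≤ 2 * (t / (t * |l.im| + 1)) * (Real.cosh (t * l.im) / π) := by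
  have him : |l.im| ≤ ‖(x : ℂ) - starRingEnd ℂ l‖ := by
    simpa using Complex.abs_im_le_norm ((x : ℂ) - starRingEnd ℂ l)
  have hfar := (mul_le_mul_of_nonneg_left him (norm_nonneg (pwSinc t l x))).trans
    (norm_pwSinc_mul_norm_sub_conj_le l x)
  have hnear := norm_pwSinc_le l x ht
  rw [show 2 * (t / (t * |l.im| + 1)) * (Real.cosh (t * l.im) / π) =
      2 * t * (Real.cosh (t * l.im) / π) / (t * |l.im| + 1) by ring, le_div_iff₀ (by positivity)]
  calc ‖pwSinc t l x‖ * (t * |l.im| + 1)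
      = t * (‖pwSinc t l x‖ * |l.im|) + ‖pwSinc t l x‖ := by ring
    _ ≤ t * (Real.cosh (t * l.im) / π) + t * Real.cosh (t * l.im) / π :=
        add_le_add (mul_le_mul_of_nonneg_left hfar ht) hnear
    _ = _ := by ring

lemma sub_re_sq_mul_norm_pwSinc_sq_le :
    (x - l.re) ^ 2 * ‖pwSinc t l x‖ ^ 2 ≤ (Real.cosh (t * l.im) / π) ^ 2 := by
  have hre : |x - l.re| ≤ ‖(x : ℂ) - starRingEnd ℂ l‖ := by
    simpa using Complex.abs_re_le_norm ((x : ℂ) - starRingEnd ℂ l)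
  have h : |x - l.re| * ‖pwSinc t l x‖ ≤ Real.cosh (t * l.im) / π := by
    rw [mul_comm]
    exact (mul_le_mul_of_nonneg_left hre (norm_nonneg _)).trans
      (norm_pwSinc_mul_norm_sub_conj_le l x)
  rw [← sq_abs (x - l.re), ← mul_pow]
  exact pow_le_pow_left₀ (by positivity) h 2

lemma pwSinc_self_of_im_ne_zero (hb : l.im ≠ 0) :
    pwSinc t l l = ((Real.sinh (2 * t * l.im) / (2 * π * l.im) : ℝ) : ℂ) := by
  have hsub : l - starRingEnd ℂ l = ((2 * l.im : ℝ) : ℂ) * I := sub_conj l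
  rw [pwSinc, if_neg (fun h => hb (conj_eq_iff_im.mp h.symm)), hsub,
    show (t : ℂ) * (((2 * l.im : ℝ) : ℂ) * I) = ((2 * t * l.im : ℝ) : ℂ) * I by push_cast; ring,
    sin_mul_I, ← ofReal_sinh]
  have : (l.im : ℂ) ≠ 0 := ofReal_ne_zero.mpr hb
  push_cast
  field_simp

lemma cosh_sq_mul_div_le_re_pwSinc_self (ht : 0 ≤ t) :
    Real.cosh (t * l.im) ^ 2 * (t / (t * |l.im| + 1)) / π ≤ (pwSinc t l l).re := by
  by_cases hb : l.im = 0
  · rw [pwSinc, if_pos (conj_eq_iff_im.mpr hb).symm, ofReal_re, hb]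
    simp
  set u := t * |l.im| with hu
  have hu1 : 0 < u + 1 := by positivity
  have hsinh : Real.sinh (2 * t * l.im) / (2 * π * l.im) =
      Real.sinh (2 * u) / (2 * π * |l.im|) := by
    rcases abs_cases l.im with ⟨h, _⟩ | ⟨h, _⟩ <;> rw [hu, h]
    · ring_nf
    · rw [show 2 * (t * -l.im) = -(2 * t * l.im) by ring, Real.sinh_neg]
      field_simp
  have hcosh : Real.cosh (t * l.im) = Real.cosh u := by
    rw [← Real.cosh_abs, abs_mul, abs_of_nonneg ht]
  rw [pwSinc_self_of_im_ne_zero l hb, ofReal_re, hsinh, hcosh, Real.sinh_two_mul]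
  calc Real.cosh u ^ 2 * (t / (u + 1)) / π
      = Real.cosh u * (u * Real.cosh u) / (π * |l.im| * (u + 1)) := by
        rw [hu]; field_simp
    _ ≤ Real.cosh u * ((u + 1) * Real.sinh u) / (π * |l.im| * (u + 1)) := by
        gcongr Real.cosh u * ?_ / _
        exact Real.mul_cosh_le_add_one_mul_sinh u
    _ = 2 * Real.sinh u * Real.cosh u / (2 * π * |l.im|) := by
        field_simp

end PaleyWienerKernel

lemma VV_pos (s : ℝ) {t : ℝ} (ht : 0 < t) (l : ℂ) : 0 < VV s t l :=
  mul_pos (one_pos.trans_le (le_max_left _ _))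
    ((by positivity : (0 : ℝ) < _).trans_le (cosh_sq_mul_div_le_re_pwSinc_self l ht.le))

lemma ENNReal.lintegral_mul_sq_le_sq_mul_sq {α : Type*} [MeasurableSpace α] {μ : Measure α}
    {f h : α → ℝ≥0∞} (hf : AEMeasurable f μ) (hh : AEMeasurable h μ) :
    (∫⁻ x, f x * h x ∂μ) ^ 2 ≤ (∫⁻ x, f x ^ 2 ∂μ) * ∫⁻ x, h x ^ 2 ∂μ := by
  have hCS := ENNReal.lintegral_mul_le_Lp_mul_Lq μ Real.HolderConjugate.two_two hf hh
  simp only [ENNReal.rpow_two, Pi.mul_apply] at hCS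
  calc (∫⁻ x, f x * h x ∂μ) ^ 2
      ≤ ((∫⁻ x, f x ^ 2 ∂μ) ^ (1 / 2 : ℝ) * (∫⁻ x, h x ^ 2 ∂μ) ^ (1 / 2 : ℝ)) ^ 2 :=
        pow_le_pow_left₀ zero_le hCS 2
    _ = (∫⁻ x, f x ^ 2 ∂μ) * ∫⁻ x, h x ^ 2 ∂μ := by
        rw [mul_pow, ← ENNReal.rpow_natCast, ← ENNReal.rpow_natCast, ← ENNReal.rpow_mul,
          ← ENNReal.rpow_mul]
        norm_num

lemma ENNReal.lintegral_mul_le_of_lintegral_sq_le {α : Type*} [MeasurableSpace α]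
    {μ : Measure α} {f h : α → ℝ≥0∞} (hf : AEMeasurable f μ) (hh : AEMeasurable h μ)
    {a b : ℝ} (ha : 0 ≤ a) (hb : 0 ≤ b) {M : ℝ≥0∞}
    (hfa : ∫⁻ x, f x ^ 2 ∂μ ≤ ENNReal.ofReal a * M)
    (hhb : ∫⁻ x, h x ^ 2 ∂μ ≤ ENNReal.ofReal b * M) :
    ∫⁻ x, f x * h x ∂μ ≤ ENNReal.ofReal (√(a * b)) * M := by
  refine (ENNReal.pow_le_pow_left_iff two_ne_zero).mp
    ((ENNReal.lintegral_mul_sq_le_sq_mul_sq hf hh).trans ?_)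
  calc (∫⁻ x, f x ^ 2 ∂μ) * ∫⁻ x, h x ^ 2 ∂μ ≤ ENNReal.ofReal a * M * (ENNReal.ofReal b * M) :=
        mul_le_mul' hfa hhb
    _ = (ENNReal.ofReal (√(a * b)) * M) ^ 2 := by
        rw [mul_pow, ← ENNReal.ofReal_pow (Real.sqrt_nonneg _), Real.sq_sqrt (mul_nonneg ha hb),
          ENNReal.ofReal_mul ha]
        ring

open Metric

lemma withDensity_ball_le_ofReal_mul_HLMax (g : ℝ → ℂ) (s : ℝ) {r : ℝ} (hr : 0 < r) :
    volume.withDensity (fun x => ‖g x‖ₑ) (ball s r) ≤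
      ENNReal.ofReal (2 * r) * HLMax g s := by
  have h2r : ENNReal.ofReal (2 * r) ≠ 0 := by simpa using hr
  rw [withDensity_apply _ measurableSet_ball, Real.ball_eq_Ioo,
    ← ENNReal.inv_mul_le_iff h2r ENNReal.ofReal_ne_top]
  exact (le_iSup₂ (f := fun r (_ : 0 < r) => (ENNReal.ofReal (2 * r))⁻¹ *
    ∫⁻ x in Set.Ioo (s - r) (s + r), (‖g x‖₊ : ℝ≥0∞)) r hr)

section DyadicDecomposition

variable {μ : Measure ℝ} {s : ℝ} {M : ℝ≥0∞}

lemma lintegral_tsum_indicator_ball_le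
    (hμ : ∀ r, 0 < r → μ (ball s r) ≤ ENNReal.ofReal (2 * r) * M)
    {c r : ℕ → ℝ} (hc : ∀ k, 0 ≤ c k) (hr : ∀ k, 0 < r k)
    (hsum : Summable fun k => c k * (2 * r k)) :
    ∫⁻ x, ∑' k, (ball s (r k)).indicator (fun _ => ENNReal.ofReal (c k)) x ∂μ ≤
      ENNReal.ofReal (∑' k, c k * (2 * r k)) * M := by
  rw [lintegral_tsum fun k => (measurable_const.indicator measurableSet_ball).aemeasurable,
    ENNReal.ofReal_tsum_of_nonneg (fun k => mul_nonneg (hc k) (by linarith [hr k])) hsum,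
    ← ENNReal.tsum_mul_right]
  refine ENNReal.tsum_le_tsum fun k => ?_
  rw [lintegral_indicator_const measurableSet_ball, ENNReal.ofReal_mul (hc k), mul_assoc]
  gcongr
  exact hμ _ (hr k)

lemma ofReal_le_tsum_indicator_dyadic_ball {a m B R w x : ℝ} (hR : 0 < R) (haR : |a - s| ≤ R)
    (hmR : 4 ≤ (m * R) ^ 2) (hw₁ : w ≤ B * m ^ 2) (hw₂ : (x - a) ^ 2 * w ≤ B) :
    ENNReal.ofReal w ≤ ∑' k : ℕ,
      (ball s (2 ^ (k + 1) * R)).indicator (fun _ => ENNReal.ofReal (B * m ^ 2 / 4 ^ k)) x := by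
  have hex : ∃ k : ℕ, |x - s| < 2 ^ (k + 1) * R := by
    obtain ⟨n, hn⟩ := pow_unbounded_of_one_lt (|x - s| / R) one_lt_two
    exact ⟨n, (div_lt_iff₀ hR).mp (hn.trans (pow_lt_pow_right₀ one_lt_two n.lt_succ_self))⟩
  classical
  refine le_trans ?_ (ENNReal.le_tsum (Nat.find hex))
  rw [Set.indicator_of_mem (mem_ball.mpr (by rw [Real.dist_eq]; exact Nat.find_spec hex))]
  refine ENNReal.ofReal_le_ofReal ?_
  -- `k := Nat.find hex` is the dyadic annulus of `x`: the ball of index `k - 1` misses `x`.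
  rcases hk : Nat.find hex with _ | j
  · simpa using hw₁
  have hfar : 2 ^ (j + 1) * R ≤ |x - s| := not_lt.mp (Nat.find_min hex (by omega))
  have hxa : 2 ^ j * R ≤ |x - a| := by
    have := abs_sub_le x a s
    have : (1 : ℝ) ≤ 2 ^ j := one_le_pow₀ one_le_two
    rw [pow_succ] at hfar
    nlinarith
  rw [le_div_iff₀ (by positivity)]
  rcases le_or_gt w 0 with hw | hw
  · nlinarith [one_le_pow₀ (M₀ := ℝ) (a := 4) (n := j + 1) (by norm_num)]
  have hnear : 4 ^ j * R ^ 2 * w ≤ B := by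
    calc 4 ^ j * R ^ 2 * w = (2 ^ j * R) ^ 2 * w := by
          rw [mul_pow, ← pow_mul, mul_comm j, pow_mul]; norm_num
      _ ≤ |x - a| ^ 2 * w := by gcongr
      _ = (x - a) ^ 2 * w := by rw [sq_abs]
      _ ≤ B := hw₂
  refine le_of_mul_le_mul_right ?_ (by positivity : (0 : ℝ) < R ^ 2)
  calc w * 4 ^ (j + 1) * R ^ 2 = 4 * (4 ^ j * R ^ 2 * w) := by ring
    _ ≤ 4 * B := by linarith
    _ ≤ (m * R) ^ 2 * B := mul_le_mul_of_nonneg_right hmR (le_trans (by positivity) hnear)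
    _ = B * m ^ 2 * R ^ 2 := by ring

lemma lintegral_ofReal_le_of_le_of_sq_mul_le {a m B : ℝ} {w : ℝ → ℝ} (hm : 0 < m)
    (hμ : ∀ r, 0 < r → μ (ball s r) ≤ ENNReal.ofReal (2 * r) * M)
    (hw₁ : ∀ x, w x ≤ B * m ^ 2) (hw₂ : ∀ x, (x - a) ^ 2 * w x ≤ B) :
    ∫⁻ x, ENNReal.ofReal (w x) ∂μ ≤ ENNReal.ofReal (B * (8 * m ^ 2 * |a - s| + 16 * m)) * M := by
  have hB : 0 ≤ B := by simpa using hw₂ a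
  set R := |a - s| + 2 / m with hRdef
  have hR : 0 < R := by positivity
  have hmR : 4 ≤ (m * R) ^ 2 := by
    have : 2 ≤ m * R := by
      rw [hRdef, mul_add, mul_div_cancel₀ _ hm.ne']
      nlinarith [abs_nonneg (a - s)]
    nlinarith
  have hterm : ∀ k : ℕ, B * m ^ 2 / 4 ^ k * (2 * (2 ^ (k + 1) * R)) =
      8 * B * m ^ 2 * R / 2 / 2 ^ k := by
    intro k
    rw [show (4 : ℝ) ^ k = 2 ^ k * 2 ^ k by rw [← mul_pow]; norm_num]
    field_simp
    ring
  calc ∫⁻ x, ENNReal.ofReal (w x) ∂μ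
      ≤ ∫⁻ x, ∑' k : ℕ, (ball s (2 ^ (k + 1) * R)).indicator
          (fun _ => ENNReal.ofReal (B * m ^ 2 / 4 ^ k)) x ∂μ :=
        lintegral_mono fun x => ofReal_le_tsum_indicator_dyadic_ball hR
          (le_add_of_nonneg_right (by positivity)) hmR (hw₁ x) (hw₂ x)
    _ ≤ ENNReal.ofReal (∑' k : ℕ, B * m ^ 2 / 4 ^ k * (2 * (2 ^ (k + 1) * R))) * M :=
        lintegral_tsum_indicator_ball_le hμ (fun k => by positivity) (fun k => by positivity)
          (by simp_rw [hterm]; exact summable_geometric_two' _)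
    _ = ENNReal.ofReal (B * (8 * m ^ 2 * |a - s| + 16 * m)) * M := by
        simp_rw [hterm]
        rw [tsum_geometric_two', hRdef]
        congr 2
        field_simp
        ring

end DyadicDecomposition

lemma lintegral_enorm_pwSinc_sq_le {μ : Measure ℝ} {s : ℝ} {M : ℝ≥0∞}
    (hμ : ∀ r, 0 < r → μ (ball s r) ≤ ENNReal.ofReal (2 * r) * M) {t : ℝ} (ht : 0 < t) (l : ℂ) :
    ∫⁻ x : ℝ, ‖pwSinc t l x‖ₑ ^ 2 ∂μ ≤ ENNReal.ofReal (64 / π * VV s t l) * M := by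
  set m := t / (t * |l.im| + 1) with hm
  set c := Real.cosh (t * l.im) / π with hc
  have hnear (x : ℝ) : ‖pwSinc t l x‖ ^ 2 ≤ c ^ 2 * (2 * m) ^ 2 := by
    rw [← mul_pow, mul_comm c]
    exact pow_le_pow_left₀ (norm_nonneg _) (norm_pwSinc_le_two_mul_div_add_one l x ht.le) 2
  have hbound := lintegral_ofReal_le_of_le_of_sq_mul_le (a := l.re) (by positivity) hμ hnear
    (fun x => sub_re_sq_mul_norm_pwSinc_sq_le l x)
  simp_rw [← ofReal_norm, ← ENNReal.ofReal_pow (norm_nonneg _)]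
  refine hbound.trans ?_
  gcongr ENNReal.ofReal ?_ * _
  have hX₁ : 1 ≤ XX s t l := le_max_left _ _
  have hX₂ : m * |l.re - s| ≤ XX s t l := by
    rw [hm, div_mul_eq_mul_div]
    exact le_max_right _ _
  have hV : XX s t l * (Real.cosh (t * l.im) ^ 2 * m / π) ≤ VV s t l :=
    mul_le_mul_of_nonneg_left (cosh_sq_mul_div_le_re_pwSinc_self l ht.le) (by linarith)
  calc c ^ 2 * (8 * (2 * m) ^ 2 * |l.re - s| + 16 * (2 * m))
      = 32 * c ^ 2 * m * (m * |l.re - s| + 1) := by ring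
    _ ≤ 32 * c ^ 2 * m * (2 * XX s t l) := by gcongr; linarith
    _ = 64 / π * (XX s t l * (Real.cosh (t * l.im) ^ 2 * m / π)) := by rw [hc]; ring
    _ ≤ 64 / π * VV s t l := by gcongr

/-- bilinear sinc kernel bound by the Hardy–Littlewood maximal
function. -/
theorem bilinear_sinc_kernel_bound_by_maximal :
    ∃ C : ℝ, 0 < C ∧
      ∀ (t : ℝ), 0 < t → ∀ (s : ℝ) (l z : ℂ) (g : ℝ → ℂ),
      LocallyIntegrable g →
      ENNReal.ofReal (‖∫ x : ℝ,
          pwSinc t l (x : ℂ) * (starRingEnd ℂ) (pwSinc t z (x : ℂ)) * g x‖) ≤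
        ENNReal.ofReal (C * Real.sqrt (VV s t l * VV s t z)) * HLMax g s := by
  refine ⟨64 / π, by positivity, fun t ht s l z g hg => ?_⟩
  set μ := volume.withDensity fun x => ‖g x‖ₑ
  have hμ : ∀ r, 0 < r → μ (ball s r) ≤ ENNReal.ofReal (2 * r) * HLMax g s :=
    fun r hr => withDensity_ball_le_ofReal_mul_HLMax g s hr
  have hK (w : ℂ) : AEMeasurable (fun x : ℝ => ‖pwSinc t w x‖ₑ) μ :=
    ((measurable_pwSinc t w).comp measurable_ofReal).enorm.aemeasurable
  have hV (w : ℂ) : 0 ≤ 64 / π * VV s t w := by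
    have := VV_pos s ht w
    positivity
  calc ENNReal.ofReal ‖∫ x : ℝ, pwSinc t l x * starRingEnd ℂ (pwSinc t z x) * g x‖
      ≤ ∫⁻ x : ℝ, ‖pwSinc t l x * starRingEnd ℂ (pwSinc t z x) * g x‖ₑ := by
        rw [ofReal_norm]
        exact enorm_integral_le_lintegral_enorm _
    _ = ∫⁻ x : ℝ, ‖pwSinc t l x‖ₑ * ‖pwSinc t z x‖ₑ ∂μ := by
        rw [lintegral_withDensity_eq_lintegral_mul_non_measurable₀ _ hg.aestronglyMeasurable.enorm
          (ae_of_all _ fun _ => ENNReal.coe_lt_top)]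
        congr 1 with x
        simp [mul_comm]
    _ ≤ ENNReal.ofReal (√(64 / π * VV s t l * (64 / π * VV s t z))) * HLMax g s :=
        ENNReal.lintegral_mul_le_of_lintegral_sq_le (hK l) (hK z) (hV l) (hV z)
          (lintegral_enorm_pwSinc_sq_le hμ ht l) (lintegral_enorm_pwSinc_sq_le hμ ht z)
    _ = ENNReal.ofReal (64 / π * √(VV s t l * VV s t z)) * HLMax g s := by
        rw [mul_mul_mul_comm, Real.sqrt_mul (mul_self_nonneg _), Real.sqrt_mul_self (by positivity)]
end

section
/- (Evolution of the derivative of the inner function along a zero curve.) Let I ⊆ ℝ be an open interval, U ⊆ ℂ open, f : I → ℂ, and let θ : I × U → ℂ be twice continuously differentiable, with θ(t,·) holomorphic on U for each t, satisfying the Riccati equation ∂_t θ(t,ζ) = 2 i ζ θ(t,ζ) + f(t) − conj(f(t)) θ(t,ζ)² on I × U. Let ζ : I → U be differentiable with θ(t, ζ(t)) = 0 and ∂_ζ θ(t, ζ(t)) ≠ 0 for all t ∈ I. Then t ↦ ∂_ζ θ(t, ζ(t)) is differentiable and (d/dt) [ ∂_ζ θ(t, ζ(t)) ] = 2 i ζ(t)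 · ∂_ζ θ(t, ζ(t)) − f(t) · ∂²_ζ θ(t, ζ(t)) / ∂_ζ θ(t, ζ(t)). -/
/-!
Write `∂_t`, `∂_z` for the partial derivatives of `θ`. By symmetry of second derivatives,
`∂_t ∂_z θ = ∂_z ∂_t θ`, and by the Riccati equation the latter is
`2iθ + 2iz ∂_zθ − 2 f̄ θ ∂_zθ`, which is `2iζ ∂_zθ` on the zero curve. The chain rule gives
`(d/dt) ∂_zθ(t, ζ) = ∂_t ∂_zθ + ζ' ∂_z²θ`, and differentiating `θ(t, ζ(t)) = 0` gives
`ζ' = −f / ∂_zθ`, since `∂_tθ = f` on the zero curve.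
-/

open Filter Topology Function

section Prod

variable {𝕜 : Type*} [NontriviallyNormedField 𝕜]
  {E F G : Type*} [NormedAddCommGroup E] [NormedSpace 𝕜 E] [NormedAddCommGroup F]
  [NormedSpace 𝕜 F] [NormedAddCommGroup G] [NormedSpace 𝕜 G]

theorem HasFDerivAt.apply_one_zero_eq {g : 𝕜 × F → G} {L : 𝕜 × F →L[𝕜] G} {x : 𝕜} {y : F}
    {a : G} (hg : HasFDerivAt g L (x, y)) (ha : HasDerivAt (fun x' => g (x', y)) a x) :
    L (1, 0) = a := by
  simpa using (hg.comp x (hasFDerivAt_prodMk_left x y)).hasDerivAt.unique ha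

theorem HasFDerivAt.hasDerivAt_comp_graph {g : 𝕜 × F → G} {L : 𝕜 × F →L[𝕜] G} {y : 𝕜 → F}
    {x : 𝕜} {y' : F} (hg : HasFDerivAt g L (x, y x)) (hy : HasDerivAt y y' x) :
    HasDerivAt (fun τ => g (τ, y τ)) (L (1, y')) x :=
  hg.comp_hasDerivAt x ((hasDerivAt_id x).prodMk hy)

variable {𝕜' : Type*} [NontriviallyNormedField 𝕜'] [NormedAlgebra 𝕜 𝕜'] [NormedSpace 𝕜' G]
  [IsScalarTower 𝕜 𝕜' G]

theorem HasFDerivAt.apply_zero_eq_smul {g : E × 𝕜' → G} {L : E × 𝕜' →L[𝕜] G} {x : E} {y : 𝕜'}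
    {h : 𝕜' → G} {d : G} (hg : HasFDerivAt g L (x, y)) (hh : HasDerivAt h d y)
    (hgh : (fun y' => g (x, y')) =ᶠ[𝓝 y] h) (v : 𝕜') : L (0, v) = v • d := by
  have := ((hg.comp y (hasFDerivAt_prodMk_right x y)).congr_of_eventuallyEq hgh.symm).unique
    (hh.hasFDerivAt.restrictScalars 𝕜)
  simpa using DFunLike.congr_fun this v

theorem HasFDerivAt.add_smul_eq_zero_of_comp_graph {g : 𝕜 × 𝕜' → G} {L : 𝕜 × 𝕜' →L[𝕜] G}
    {y : 𝕜 → 𝕜'} {x : 𝕜} {y' : 𝕜'} {a b : G} (hg : HasFDerivAt g L (x, y x))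
    (hy : HasDerivAt y y' x) (ha : HasDerivAt (fun s => g (s, y x)) a x)
    (hb : HasDerivAt (fun z => g (x, z)) b (y x)) (hzero : ∀ᶠ τ in 𝓝 x, g (τ, y τ) = 0) :
    a + y' • b = 0 := by
  rw [← hg.apply_one_zero_eq ha, ← hg.apply_zero_eq_smul hb EventuallyEq.rfl, ← map_add,
    Prod.mk_add_mk, add_zero, zero_add]
  exact (hg.hasDerivAt_comp_graph hy).unique ((hasDerivAt_const x 0).congr_of_eventuallyEq hzero)

end Prod

section Symmetric

variable {𝕜 : Type*} [NontriviallyNormedField 𝕜]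
  {E F : Type*} [NormedAddCommGroup E] [NormedSpace 𝕜 E] [NormedAddCommGroup F]
  [NormedSpace 𝕜 F]

theorem ContDiffAt.differentiableAt_fderiv_apply {g : E → F} {p : E} (hg : ContDiffAt 𝕜 2 g p)
    (v : E) : DifferentiableAt 𝕜 (fun q => fderiv 𝕜 g q v) p :=
  ((hg.fderiv_right (m := 1) le_rfl).differentiableAt one_ne_zero).clm_apply
    (differentiableAt_const v)

theorem ContDiffAt.fderiv_fderiv_apply_comm [IsRCLikeNormedField 𝕜] {g : E → F} {p : E}
    (hg : ContDiffAt 𝕜 2 g p) (u v : E) :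
    fderiv 𝕜 (fun q => fderiv 𝕜 g q v) p u = fderiv 𝕜 (fun q => fderiv 𝕜 g q u) p v := by
  have hd := (hg.fderiv_right (m := 1) le_rfl).differentiableAt one_ne_zero
  rw [fderiv_clm_apply hd (differentiableAt_const v), fderiv_clm_apply hd (differentiableAt_const u)]
  simpa using (hg.isSymmSndFDerivAt (by simp)).eq u v

theorem ContDiffAt.fderiv_fderiv_apply_zero_one_apply [IsRCLikeNormedField 𝕜]
    {𝕜' : Type*} [NontriviallyNormedField 𝕜'] [NormedAlgebra 𝕜 𝕜'] [NormedSpace 𝕜' F]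
    [IsScalarTower 𝕜 𝕜' F] {g : E × 𝕜' → F} {x : E} {y : 𝕜'} (hg : ContDiffAt 𝕜 2 g (x, y))
    {u : E} {a b : 𝕜' → F} {a' b' : F} (ha : HasDerivAt a a' y) (hb : HasDerivAt b b' y)
    (hga : (fun z => fderiv 𝕜 g (x, z) (u, 0)) =ᶠ[𝓝 y] a)
    (hgb : (fun z => fderiv 𝕜 g (x, z) (0, 1)) =ᶠ[𝓝 y] b) (v : 𝕜') :
    fderiv 𝕜 (fun q => fderiv 𝕜 g q (0, 1)) (x, y) (u, v) = a' + v • b' := by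
  have hsplit : ((u, v) : E × 𝕜') = (u, 0) + (0, v) := by simp
  rw [hsplit, map_add, hg.fderiv_fderiv_apply_comm,
    ((hg.differentiableAt_fderiv_apply _).hasFDerivAt.apply_zero_eq_smul ha hga 1),
    ((hg.differentiableAt_fderiv_apply _).hasFDerivAt.apply_zero_eq_smul hb hgb v), one_smul]

theorem ContDiffAt.hasDerivAt_fderiv_apply_zero_one_comp_graph [IsRCLikeNormedField 𝕜]
    {𝕜' : Type*} [NontriviallyNormedField 𝕜'] [NormedAlgebra 𝕜 𝕜'] [NormedSpace 𝕜' F]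
    [IsScalarTower 𝕜 𝕜' F] {g : 𝕜 × 𝕜' → F} {y : 𝕜 → 𝕜'} {x : 𝕜} {y' : 𝕜'}
    (hg : ContDiffAt 𝕜 2 g (x, y x)) (hy : HasDerivAt y y' x) {a b : 𝕜' → F} {a' b' : F}
    (ha : HasDerivAt a a' (y x)) (hb : HasDerivAt b b' (y x))
    (hga : (fun z => fderiv 𝕜 g (x, z) (1, 0)) =ᶠ[𝓝 (y x)] a)
    (hgb : (fun z => fderiv 𝕜 g (x, z) (0, 1)) =ᶠ[𝓝 (y x)] b) :
    HasDerivAt (fun τ => fderiv 𝕜 g (τ, y τ) (0, 1)) (a' + y' • b') x := by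
  have := (hg.differentiableAt_fderiv_apply (0, 1)).hasFDerivAt.hasDerivAt_comp_graph hy
  rwa [hg.fderiv_fderiv_apply_zero_one_apply ha hb hga hgb] at this

end Symmetric

theorem hasDerivAt_riccati_of_eq_zero {h : ℂ → ℂ} {d w : ℂ} (hh : HasDerivAt h d w)
    (h0 : h w = 0) (c a b : ℂ) :
    HasDerivAt (fun z => c * z * h z + a - b * h z ^ 2) (c * w * d) w := by
  have := ((((hasDerivAt_id' w).const_mul c).fun_mul hh).add_const a).fun_sub
    ((hh.fun_pow 2).const_mul b)
  simpa [h0] using this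

theorem evolution_of_derivative_along_zero_curve_general
    (I : Set ℝ) (hIopen : IsOpen I)
    (U : Set ℂ) (hUopen : IsOpen U)
    (f : ℝ → ℂ) (θ : ℝ → ℂ → ℂ)
    (hC2 : ContDiffOn ℝ 2 (fun p : ℝ × ℂ => θ p.1 p.2) (I ×ˢ U))
    (hhol : ∀ t ∈ I, DifferentiableOn ℂ (θ t) U)
    (hric : ∀ t ∈ I, ∀ w ∈ U,
      HasDerivAt (fun τ => θ τ w)
        (2 * Complex.I * w * θ t w + f t - (starRingEnd ℂ) (f t) * (θ t w) ^ 2) t)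
    (ζ : ℝ → ℂ) (hζU : ∀ t ∈ I, ζ t ∈ U)
    (hζdiff : ∀ t ∈ I, DifferentiableAt ℝ ζ t)
    (hzero : ∀ t ∈ I, θ t (ζ t) = 0)
    (hne : ∀ t ∈ I, deriv (θ t) (ζ t) ≠ 0) :
    ∀ t ∈ I, HasDerivAt (fun τ => deriv (θ τ) (ζ τ))
      (2 * Complex.I * ζ t * deriv (θ t) (ζ t) -
        f t * deriv (deriv (θ t)) (ζ t) / deriv (θ t) (ζ t)) t := by
  intro t ht
  set Θ : ℝ × ℂ → ℂ := uncurry θ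
  have hΘ : ∀ q ∈ I ×ˢ U, ContDiffAt ℝ 2 Θ q := fun q hq =>
    hC2.contDiffAt ((hIopen.prod hUopen).mem_nhds hq)
  have hΘ' : ∀ q ∈ I ×ˢ U, HasFDerivAt Θ (fderiv ℝ Θ q) q := fun q hq =>
    ((hΘ q hq).differentiableAt two_ne_zero).hasFDerivAt
  have hθ : ∀ τ ∈ I, ∀ w ∈ U, HasDerivAt (θ τ) (deriv (θ τ) w) w := fun τ hτ w hw =>
    ((hhol τ hτ).differentiableAt (hUopen.mem_nhds hw)).hasDerivAt
  have partial_snd : ∀ τ ∈ I, ∀ w ∈ U, fderiv ℝ Θ (τ, w) (0, 1) = deriv (θ τ) w :=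
    fun τ hτ w hw => by
      simpa using (hΘ' (τ, w) ⟨hτ, hw⟩).apply_zero_eq_smul (hθ τ hτ w hw) EventuallyEq.rfl 1
  have hζt := hζU t ht
  have hp : (t, ζ t) ∈ I ×ˢ U := ⟨ht, hζt⟩
  have hζ : HasDerivAt ζ (deriv ζ t) t := (hζdiff t ht).hasDerivAt
  have hζ' : f t + deriv ζ t * deriv (θ t) (ζ t) = 0 := by
    simpa [hzero t ht] using (hΘ' _ hp).add_smul_eq_zero_of_comp_graph hζ (hric t ht _ hζt)
      (hθ t ht _ hζt) (eventually_of_mem (hIopen.mem_nhds ht) hzero)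
  have hU : ∀ᶠ z in 𝓝 (ζ t), z ∈ U := hUopen.mem_nhds hζt
  have hcurve : (fun τ => fderiv ℝ Θ (τ, ζ τ) (0, 1)) =ᶠ[𝓝 t] fun τ => deriv (θ τ) (ζ τ) := by
    filter_upwards [hIopen.mem_nhds ht, hζ.continuousAt.preimage_mem_nhds hU] with τ hτ hτU
    exact partial_snd τ hτ _ hτU
  have hmain := (hΘ _ hp).hasDerivAt_fderiv_apply_zero_one_comp_graph hζ
    (hasDerivAt_riccati_of_eq_zero (hθ t ht _ hζt) (hzero t ht) (2 * Complex.I) (f t)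
      (starRingEnd ℂ (f t)))
    (((hhol t ht).deriv hUopen).differentiableAt hU).hasDerivAt
    (eventually_of_mem hU fun w hw => (hΘ' (t, w) ⟨ht, hw⟩).apply_one_zero_eq (hric t ht w hw))
    (eventually_of_mem hU (partial_snd t ht))
  refine (hmain.congr_of_eventuallyEq hcurve.symm).congr_deriv ?_
  rw [smul_eq_mul]
  field_simp [hne t ht]
  linear_combination deriv (deriv (θ t)) (ζ t) * hζ'

/-- evolution of the derivative of the inner function along a zero curve:
`(d/dt) ∂_ζθ(t, ζ(t)) = 2 i ζ(t) ∂_ζθ(t, ζ(t)) − f(t) ∂²_ζθ(t, ζ(t)) / ∂_ζθ(t, ζ(t))`. -/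
theorem evolution_of_derivative_along_zero_curve
    (I : Set ℝ) (hIopen : IsOpen I) (hIconn : I.OrdConnected)
    (U : Set ℂ) (hUopen : IsOpen U)
    (f : ℝ → ℂ) (θ : ℝ → ℂ → ℂ)
    (hC2 : ContDiffOn ℝ 2 (fun p : ℝ × ℂ => θ p.1 p.2) (I ×ˢ U))
    (hhol : ∀ t ∈ I, DifferentiableOn ℂ (θ t) U)
    (hric : ∀ t ∈ I, ∀ w ∈ U,
      HasDerivAt (fun τ => θ τ w)
        (2 * Complex.I * w * θ t w + f t - (starRingEnd ℂ) (f t) * (θ t w) ^ 2) t)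
    (ζ : ℝ → ℂ) (hζU : ∀ t ∈ I, ζ t ∈ U)
    (hζdiff : ∀ t ∈ I, DifferentiableAt ℝ ζ t)
    (hzero : ∀ t ∈ I, θ t (ζ t) = 0)
    (hne : ∀ t ∈ I, deriv (θ t) (ζ t) ≠ 0) :
    ∀ t ∈ I, HasDerivAt (fun τ => deriv (θ τ) (ζ τ))
      (2 * Complex.I * ζ t * deriv (θ t) (ζ t) -
        f t * deriv (deriv (θ t)) (ζ t) / deriv (θ t) (ζ t)) t :=
  evolution_of_derivative_along_zero_curve_general I hIopen U hUopen f θ hC2 hhol hric ζ hζU hζdiff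
    hzero hne
end
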